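/- arXiv:2002.04411 — 3 statements merged into one kernel-verified Lean document; each statement's English description precedes it below -/
import Mathlib

section
/- For n = 5m−2 with integer m > 1, let Δ_{n,n-5} be the triangle v0v1v2 with three pendant paths at v2 of orders m, m−1, m−1, one pendant path at v1 of order m−1, and one at v0 of order m−1 (orders as equal as possible, the longer at v2), and let Ω_{n,n-5} be the square v0v1v2v3 with pendant paths of orders m−1, m, m, m at v0, v1, v2, v3 and an additional pendant path of order m at v2. Then N(Ω_{n,n-5}) − N(Δ_{n,n-5}) = m(m−2). -/
/-!
A connected set of vertices of a graph `H` with pendant paths either lies on one pendant path,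
where it is a segment, or meets `H` in a connected set `C` and contains an initial piece of every
path hanging from `C` (and nothing of the others). Hence
`N = ∑ i, (len i + 1).choose 2 + ∑_C ∏_{i : att i ∈ C} (len i + 1)`, the second sum running over
the connected vertex sets of `H`. In the triangle every nonempty vertex set is connected, in the
4-cycle all except the two diagonals, and the two resulting polynomials in `m` differ by `m(m - 2)`.
-/

open SimpleGraph

/-- Number of (nonempty) connected induced subgraphs of `G`. -/
noncomputable def numCIS {V : Type*} (G : SimpleGraph V) : ℕ :=
  Nat.card {s : Finset V // s.Nonempty ∧ (G.induce (↑s : Set V)).Connected}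

/-- Number of connected induced subgraphs of `G` containing the vertex `v`. -/
noncomputable def numCISat {V : Type*} (G : SimpleGraph V) (v : V) : ℕ :=
  Nat.card {s : Finset V // v ∈ s ∧ (G.induce (↑s : Set V)).Connected}

/-- Number of connected induced subgraphs of `G` containing both `u` and `v`. -/
noncomputable def numCISat2 {V : Type*} (G : SimpleGraph V) (u v : V) : ℕ :=
  Nat.card {s : Finset V // u ∈ s ∧ v ∈ s ∧ (G.induce (↑s : Set V)).Connected}

/-- The cycle `C_g` together with `k` pendant paths: the `i`-th pendant path has
`len i` new vertices and is attached at the cycle vertex `att i`. -/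
def cyclePendants (g k : ℕ) (att : Fin k → Fin g) (len : Fin k → ℕ) :
    SimpleGraph (Fin g ⊕ Σ i : Fin k, Fin (len i)) :=
  SimpleGraph.fromRel (fun a b =>
    (∃ x y : Fin g, a = Sum.inl x ∧ b = Sum.inl y ∧ ((x : ℕ) + 1) % g = (y : ℕ)) ∨
    (∃ (i : Fin k) (p q : Fin (len i)), a = Sum.inr ⟨i, p⟩ ∧ b = Sum.inr ⟨i, q⟩ ∧
      (p : ℕ) + 1 = (q : ℕ)) ∨
    (∃ (i : Fin k) (h : 0 < len i), a = Sum.inl (att i) ∧ b = Sum.inr ⟨i, ⟨0, h⟩⟩))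

open Finset

lemma Fin.val_sub_eq_one_iff {g : ℕ} {x y : Fin g} :
    ((y - x : Fin g) : ℕ) = 1 ↔ x ≠ y ∧ ((x : ℕ) + 1) % g = y := by
  have hx := x.isLt
  have hy := y.isLt
  have hsub : ((y - x : Fin g) : ℕ) = if (x : ℕ) ≤ y then (y : ℕ) - x else g - x + y := by
    rw [Fin.val_sub]
    split_ifs with h
    · rw [show g - (x : ℕ) + y = (y - x) + g by omega, Nat.add_mod_right,
        Nat.mod_eq_of_lt (by omega)]
    · exact Nat.mod_eq_of_lt (by omega)
  have hsucc : ((x : ℕ) + 1) % g = if (x : ℕ) + 1 < g then (x : ℕ) + 1 else 0 := by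
    split_ifs with h
    · exact Nat.mod_eq_of_lt h
    · rw [show (x : ℕ) + 1 = g by omega, Nat.mod_self]
  rw [hsub, hsucc, Ne, Fin.ext_iff]
  split_ifs <;> omega

lemma Fin.exists_iff_lt_of_isLowerSet {n : ℕ} {D : Set (Fin n)} (hD : IsLowerSet D) :
    ∃ c ≤ n, ∀ q : Fin n, q ∈ D ↔ (q : ℕ) < c := by
  rcases hD.eq_univ_or_Iio with rfl | ⟨a, rfl⟩
  · exact ⟨n, le_rfl, fun q => by simp [q.isLt]⟩
  · exact ⟨a, a.isLt.le, fun q => Fin.lt_def⟩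

lemma Finset.sum_range_add_one_eq_choose_two (n : ℕ) :
    ∑ b ∈ range n, (b + 1) = (n + 1).choose 2 := by
  induction n with
  | zero => rfl
  | succ n ih =>
    rw [sum_range_succ, ih, Nat.choose_succ_succ' (n + 1), Nat.choose_one_right, add_comm]

lemma Fin.val_le_of_ite {n : ℕ} {P : Prop} [Decidable P] (c : Fin (if P then n + 1 else 1)) :
    (c : ℕ) ≤ n := by
  have := c.isLt
  split_ifs at this <;> omega

lemma Fin.val_eq_zero_of_ite_neg {n : ℕ} {P : Prop} [Decidable P]
    (c : Fin (if P then n + 1 else 1)) (h : ¬P) : (c : ℕ) = 0 := by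
  have := c.isLt
  simp only [h, if_false] at this
  omega

namespace SimpleGraph

variable {V : Type*} {G : SimpleGraph V}

theorem exists_adj_of_preconnected_induce {s T : Set V} (hs : (G.induce s).Preconnected)
    {u v : V} (hu : u ∈ s) (hv : v ∈ s) (huT : u ∈ T) (hvT : v ∉ T) :
    ∃ a ∈ s, ∃ b ∈ s, a ∈ T ∧ b ∉ T ∧ G.Adj a b := by
  obtain ⟨p⟩ := hs ⟨u, hu⟩ ⟨v, hv⟩
  obtain ⟨d, -, hd, hd'⟩ := p.exists_boundary_dart (Subtype.val ⁻¹' T) huT hvT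
  exact ⟨_, d.fst.2, _, d.snd.2, hd, hd', d.adj⟩

theorem connected_induce_iff_forall_exists_adj [DecidableEq V] {s : Finset V} :
    (G.induce (s : Set V)).Connected ↔
      s.Nonempty ∧ ∀ A ⊆ s, A.Nonempty → (s \ A).Nonempty → ∃ a ∈ A, ∃ b ∈ s \ A, G.Adj a b := by
  refine ⟨fun h => ⟨?_, ?_⟩, fun ⟨⟨x, hx⟩, hcut⟩ => ?_⟩
  · obtain ⟨⟨x, hx⟩⟩ := h.nonempty
    exact ⟨x, hx⟩
  · rintro A hA ⟨u, hu⟩ ⟨v, hv⟩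
    rw [mem_sdiff] at hv
    obtain ⟨a, -, b, hb, ha, hbA, hab⟩ :=
      exists_adj_of_preconnected_induce (T := A) h.preconnected (hA hu) hv.1 hu hv.2
    exact ⟨a, ha, b, mem_sdiff.2 ⟨hb, hbA⟩, hab⟩
  · classical
    let A := s.filter fun z => ∃ hz : z ∈ s, (G.induce (s : Set V)).Reachable ⟨x, hx⟩ ⟨z, hz⟩
    suffices hA : s \ A = ∅ by
      refine (connected_iff_exists_forall_reachable _).2 ⟨⟨x, hx⟩, fun ⟨y, hy⟩ => ?_⟩
      by_contra hxy
      simpa [A, hy, hxy] using (sdiff_eq_empty_iff_subset.1 hA) hy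
    by_contra hA
    obtain ⟨a, ha, b, hb, hab⟩ :=
      hcut A (filter_subset _ _) ⟨x, by simp [A, hx]⟩ (nonempty_iff_ne_empty.2 hA)
    obtain ⟨-, hxa⟩ := mem_filter.1 ha
    simp only [mem_sdiff, mem_filter, A, not_and, not_exists] at hb
    exact hb.2 hb.1 hb.1 (hxa.choose_spec.trans (Adj.reachable hab))

theorem connected_induce_of_forall_exists_adj_lt {K S : Set V} (hKS : K ⊆ S)
    (hK : (G.induce K).Connected) (f : V → ℕ)
    (hf : ∀ v ∈ S, v ∉ K → ∃ w ∈ S, G.Adj v w ∧ f w < f v) : (G.induce S).Connected := by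
  obtain ⟨⟨k, hk⟩⟩ := hK.nonempty
  have hreach : ∀ v (hv : v ∈ S), (G.induce S).Reachable ⟨k, hKS hk⟩ ⟨v, hv⟩ := by
    intro v
    induction hfv : f v using Nat.strong_induction_on generalizing v with
    | _ n ih =>
      intro hv
      by_cases hvK : v ∈ K
      · exact (hK ⟨k, hk⟩ ⟨v, hvK⟩).map (induceHomOfLE G hKS).toHom
      · obtain ⟨w, hw, hvw, hlt⟩ := hf v hv hvK
        exact (ih (f w) (hfv ▸ hlt) w rfl hw).trans (Adj.reachable hvw.symm)
  exact (connected_iff_exists_forall_reachable _).2 ⟨_, fun ⟨v, hv⟩ => hreach v hv⟩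

end SimpleGraph

/-- The graph `H` with, for each `i`, a path on `len i` new vertices `⟨i, 0⟩, …, ⟨i, len i - 1⟩`
whose first vertex is joined to `att i`. -/
def pendantGraph {W ι : Type*} (H : SimpleGraph W) (att : ι → W) (len : ι → ℕ) :
    SimpleGraph (W ⊕ Σ i, Fin (len i)) where
  Adj
    | .inl x, .inl y => H.Adj x y
    | .inl x, .inr v | .inr v, .inl x => x = att v.1 ∧ (v.2 : ℕ) = 0
    | .inr v, .inr w => v.1 = w.1 ∧ ((v.2 : ℕ) + 1 = w.2 ∨ (w.2 : ℕ) + 1 = v.2)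
  symm := ⟨by
    rintro (x | v) (y | w) h
    exacts [h.symm, h, h, ⟨h.1.symm, h.2.symm⟩]⟩
  loopless := ⟨by
    rintro (x | v) h
    exacts [H.loopless.irrefl x h, by omega]⟩

namespace pendantGraph

variable {W ι : Type*} {H : SimpleGraph W} {att : ι → W} {len : ι → ℕ}

@[simp] lemma adj_inl_inl {x y : W} :
    (pendantGraph H att len).Adj (.inl x) (.inl y) ↔ H.Adj x y :=
  Iff.rfl

@[simp] lemma adj_inr_inl {x : W} {i : ι} {p : Fin (len i)} :
    (pendantGraph H att len).Adj (.inr ⟨i, p⟩) (.inl x) ↔ x = att i ∧ (p : ℕ) = 0 :=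
  Iff.rfl

@[simp] lemma adj_inr_inr {i j : ι} {p : Fin (len i)} {q : Fin (len j)} :
    (pendantGraph H att len).Adj (.inr ⟨i, p⟩) (.inr ⟨j, q⟩) ↔
      i = j ∧ ((p : ℕ) + 1 = q ∨ (q : ℕ) + 1 = p) :=
  Iff.rfl

variable {s : Finset (W ⊕ Σ i, Fin (len i))}

variable (att) in
def foot : W ⊕ (Σ i, Fin (len i)) → W :=
  Sum.elim id fun v => att v.1

lemma foot_eq_or_adj {u v : W ⊕ Σ i, Fin (len i)} (h : (pendantGraph H att len).Adj u v) :
    foot att u = foot att v ∨ H.Adj (foot att u) (foot att v) := by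
  rcases u with x | ⟨i, p⟩ <;> rcases v with y | ⟨j, q⟩
  exacts [.inr h, .inl h.1, .inl h.1.symm, .inl (congrArg att h.1)]

/-- Inside a connected set, the only way off the `i`-th pendant path is through `att i`. -/
lemma inl_att_mem (hs : ((pendantGraph H att len).induce (s : Set _)).Preconnected)
    {i : ι} {p : Fin (len i)} (hp : .inr ⟨i, p⟩ ∈ s) {v : W ⊕ Σ i, Fin (len i)} (hv : v ∈ s)
    (hvi : ∀ q : Fin (len i), v ≠ .inr ⟨i, q⟩) : .inl (att i) ∈ s := by
  obtain ⟨_, -, b, hb, ⟨q, rfl⟩, hbT, hab⟩ :=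
    exists_adj_of_preconnected_induce (T := Set.range fun q : Fin (len i) => .inr ⟨i, q⟩)
      hs hp hv ⟨p, rfl⟩ (by rintro ⟨q, rfl⟩; exact hvi q rfl)
  rcases b with x | ⟨j, r⟩
  · rwa [hab.1] at hb
  · obtain ⟨rfl, -⟩ := hab
    exact absurd ⟨r, rfl⟩ hbT

/-- Inside a connected set, the only way out of the tail `{⟨i, t⟩ | r ≤ t}` of the `i`-th pendant
path is through `⟨i, r⟩`. -/
lemma inr_mem_of_le (hs : ((pendantGraph H att len).induce (s : Set _)).Preconnected)
    {i : ι} {p r : Fin (len i)} (hp : .inr ⟨i, p⟩ ∈ s) (hrp : r ≤ p)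
    {v : W ⊕ Σ i, Fin (len i)} (hv : v ∈ s) (hvr : ∀ q : Fin (len i), r ≤ q → v ≠ .inr ⟨i, q⟩) :
    .inr ⟨i, r⟩ ∈ s := by
  obtain ⟨_, ha, b, -, ⟨q, hrq, rfl⟩, hbT, hab⟩ :=
    exists_adj_of_preconnected_induce
      (T := (fun q : Fin (len i) => .inr ⟨i, q⟩) '' Set.Ici r)
      hs hp hv ⟨p, hrp, rfl⟩ (by rintro ⟨q, hq, rfl⟩; exact hvr q hq rfl)
  dsimp only at ha hab
  suffices q = r by rwa [← this]
  rcases b with x | ⟨j, t⟩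
  · exact le_antisymm (Fin.le_def.2 ((adj_inr_inl.1 hab).2 ▸ Nat.zero_le _)) hrq
  · obtain ⟨rfl, h⟩ := adj_inr_inr.1 hab
    have htr : t < r := not_le.1 fun h => hbT ⟨t, h, rfl⟩
    rw [Set.mem_Ici, Fin.le_def] at hrq
    rw [Fin.lt_def] at htr
    exact Fin.ext (by omega)

lemma connected_induce_toLeft [DecidableEq W]
    (hs : ((pendantGraph H att len).induce (s : Set _)).Preconnected) {x₀ : W}
    (hx₀ : .inl x₀ ∈ s) : (H.induce (s.toLeft : Set W)).Connected := by
  have hfoot : ∀ v ∈ s, foot att v ∈ s.toLeft := by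
    rintro (x | ⟨i, p⟩) hv
    · exact mem_toLeft.2 hv
    · exact mem_toLeft.2 (inl_att_mem hs hv hx₀ (by simp))
  refine connected_induce_iff_forall_exists_adj.2 ⟨⟨x₀, mem_toLeft.2 hx₀⟩, ?_⟩
  rintro A hA ⟨u, hu⟩ ⟨v, hv⟩
  rw [mem_sdiff] at hv
  obtain ⟨a, -, b, hb, haA, hbA, hab⟩ := exists_adj_of_preconnected_induce
    (T := foot att ⁻¹' A) hs (mem_toLeft.1 (hA hu)) (mem_toLeft.1 hv.1) hu hv.2
  refine ⟨foot att a, haA, foot att b, mem_sdiff.2 ⟨hfoot b hb, hbA⟩, ?_⟩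
  exact (foot_eq_or_adj hab).resolve_left fun h => hbA (by rw [Set.mem_preimage, ← h]; exact haA)

variable (len) in
abbrev SegmentCode := Σ i : ι, Σ b : Fin (len i), Fin (b + 1)

variable (H att len) in
abbrev ArcCode [DecidableEq W] :=
  Σ C : {C : Finset W // (H.induce (C : Set W)).Connected},
    ∀ i, Fin (if att i ∈ C.1 then len i + 1 else 1)

variable [Fintype ι] [DecidableEq ι] [DecidableEq W]

variable (H att) in
/-- A connected set either lies on one pendant path, as the segment `⟨i, a⟩, …, ⟨i, b⟩` coded by
`⟨i, b, a⟩`, or meets `H` in a connected set `C` and contains the first `c i` vertices of each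
path, where `c i = 0` is forced when `att i ∉ C`. -/
def codeFinset : SegmentCode len ⊕ ArcCode H att len → Finset (W ⊕ Σ i, Fin (len i))
  | .inl ⟨i, b, a⟩ =>
    (∅ : Finset W).disjSum {v : Σ i, Fin (len i) | v.1 = i ∧ (a : ℕ) ≤ v.2 ∧ (v.2 : ℕ) ≤ b}
  | .inr ⟨C, c⟩ => C.1.disjSum {v : Σ i, Fin (len i) | (v.2 : ℕ) < c v.1}

lemma exists_segmentCode (hs : ((pendantGraph H att len).induce (s : Set _)).Preconnected)
    (hW : s.toLeft = ∅) {i : ι} {p : Fin (len i)} (hp : .inr ⟨i, p⟩ ∈ s) :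
    ∃ c : SegmentCode len, codeFinset H att (.inl c) = s := by
  have hpath : ∀ j (q : Fin (len j)), .inr ⟨j, q⟩ ∈ s → j = i := by
    intro j q hq
    by_contra hji
    have := inl_att_mem hs hq hp (by simp [Ne.symm hji])
    simp [← mem_toLeft, hW] at this
  let D : Finset (Fin (len i)) := {q | .inr ⟨i, q⟩ ∈ s}
  have hD : D.Nonempty := ⟨p, by simp [D, hp]⟩
  have hmin : .inr ⟨i, D.min' hD⟩ ∈ s := by simpa [D] using D.min'_mem hD
  have hmax : .inr ⟨i, D.max' hD⟩ ∈ s := by simpa [D] using D.max'_mem hD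
  refine ⟨⟨i, D.max' hD, ⟨D.min' hD, Nat.lt_succ_of_le (D.min'_le _ (D.max'_mem hD))⟩⟩, ?_⟩
  ext (x | ⟨j, q⟩)
  · simp [codeFinset, ← mem_toLeft, hW]
  · simp only [codeFinset, inr_mem_disjSum, mem_filter, mem_univ, true_and]
    constructor
    · rintro ⟨rfl, h1, h2⟩
      rcases eq_or_lt_of_le h1 with h | h
      · rwa [← Fin.ext h]
      · refine inr_mem_of_le hs hmax (Fin.le_def.2 h2) hmin fun q' hq' heq => ?_
        simp only [Sum.inr.injEq, Sigma.mk.inj_iff, heq_eq_eq, true_and] at heq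
        rw [← heq, Fin.le_def] at hq'
        omega
    · intro hq
      obtain rfl := hpath j q hq
      exact ⟨rfl, D.min'_le q (by simp [D, hq]), D.le_max' q (by simp [D, hq])⟩

lemma exists_arcCode (hs : ((pendantGraph H att len).induce (s : Set _)).Preconnected) {x₀ : W}
    (hx₀ : .inl x₀ ∈ s) : ∃ c : ArcCode H att len, codeFinset H att (.inr c) = s := by
  have hlower (i : ι) : IsLowerSet {q : Fin (len i) | .inr ⟨i, q⟩ ∈ s} := fun _ r hrp hp =>
    inr_mem_of_le hs hp hrp hx₀ (by simp)
  choose c hcle hc using fun i => Fin.exists_iff_lt_of_isLowerSet (hlower i)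
  have hatt (i : ι) (hi : 0 < c i) : att i ∈ s.toLeft :=
    mem_toLeft.2 (inl_att_mem hs ((hc i ⟨0, hi.trans_le (hcle i)⟩).2 hi) hx₀ (by simp))
  refine ⟨⟨⟨s.toLeft, connected_induce_toLeft hs hx₀⟩, fun i => ⟨c i, ?_⟩⟩, ?_⟩
  · split_ifs with h
    · exact Nat.lt_succ_of_le (hcle i)
    · exact Nat.lt_one_iff.2 (Nat.eq_zero_of_not_pos fun hi => h (hatt i hi))
  · ext (x | ⟨i, q⟩)
    · simp [codeFinset]
    · simpa [codeFinset] using (hc i q).symm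

variable (att len) in
def inlHom : H →g pendantGraph H att len where
  toFun := Sum.inl
  map_rel' h := h

lemma connected_induce_codeFinset (c : SegmentCode len ⊕ ArcCode H att len) :
    ((pendantGraph H att len).induce (codeFinset H att c : Set _)).Connected := by
  rcases c with ⟨i, b, a⟩ | ⟨⟨C, hC⟩, c⟩
  · have ha : (a : ℕ) < len i := lt_of_le_of_lt (Nat.le_of_lt_succ a.isLt) b.isLt
    refine connected_induce_of_forall_exists_adj_lt (K := {.inr ⟨i, ⟨a, ha⟩⟩})
      (by simp [codeFinset, Nat.le_of_lt_succ a.isLt])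
      (by rw [induce_singleton_eq_top]; exact connected_top)
      (Sum.elim 0 fun v => v.2) ?_
    rintro (x | ⟨j, q⟩) hv hvK
    · simp [codeFinset] at hv
    · simp only [codeFinset, mem_coe, inr_mem_disjSum, mem_filter, mem_univ, true_and] at hv
      obtain ⟨rfl, h1, h2⟩ := hv
      have hq : (a : ℕ) < q := lt_of_le_of_ne h1 fun h => hvK (by simp [h])
      refine ⟨.inr ⟨j, ⟨q - 1, by omega⟩⟩, ?_, adj_inr_inr.2 ⟨rfl, .inr ?_⟩, ?_⟩
      · simp only [codeFinset, mem_coe, inr_mem_disjSum, mem_filter, mem_univ, true_and]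
        exact ⟨by omega, by omega⟩
      · change (q : ℕ) - 1 + 1 = q
        omega
      · change (q : ℕ) - 1 < q
        omega
  · have hatt (i : ι) (hi : 0 < (c i : ℕ)) : att i ∈ C := by
      by_contra h
      exact hi.ne' (Fin.val_eq_zero_of_ite_neg (c i) h)
    have hK : ((pendantGraph H att len).induce (Sum.inl '' (C : Set W))).Connected :=
      hC.map (induceHom (inlHom att len) (Set.mapsTo_image _ _))
        (by rintro ⟨_, x, hx, rfl⟩; exact ⟨⟨x, hx⟩, rfl⟩)
    refine connected_induce_of_forall_exists_adj_lt (K := Sum.inl '' (C : Set W))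
      (by rintro _ ⟨x, hx, rfl⟩; simpa [codeFinset] using hx) hK
      (Sum.elim 0 fun v => v.2 + 1) ?_
    rintro (x | ⟨i, q⟩) hv hvK
    · exact absurd ⟨x, by simpa [codeFinset] using hv, rfl⟩ hvK
    · simp only [codeFinset, mem_coe, inr_mem_disjSum, mem_filter, mem_univ, true_and] at hv
      rcases Nat.eq_zero_or_pos q with hq | hq
      · exact ⟨.inl (att i), by simpa [codeFinset] using hatt i (by omega), by simp [hq], by simp⟩
      · refine ⟨.inr ⟨i, ⟨q - 1, by omega⟩⟩, ?_, adj_inr_inr.2 ⟨rfl, .inr ?_⟩, ?_⟩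
        · simp only [codeFinset, mem_coe, inr_mem_disjSum, mem_filter, mem_univ, true_and]
          change (q : ℕ) - 1 < c i
          omega
        · change (q : ℕ) - 1 + 1 = q
          omega
        · change (q : ℕ) - 1 + 1 < q + 1
          omega

lemma codeFinset_injective : Function.Injective (codeFinset H att (len := len)) := by
  rintro (⟨i, b, a⟩ | ⟨⟨C, hC⟩, c⟩) (⟨i', b', a'⟩ | ⟨⟨C', hC'⟩, c'⟩) h
  · have hmem (j : ι) (q : Fin (len j)) :
        (j = i ∧ (a : ℕ) ≤ q ∧ (q : ℕ) ≤ b) ↔ (j = i' ∧ (a' : ℕ) ≤ q ∧ (q : ℕ) ≤ b') := by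
      simpa [codeFinset] using Finset.ext_iff.1 h (.inr ⟨j, q⟩)
    have hab := Nat.le_of_lt_succ a.isLt
    have hab' := Nat.le_of_lt_succ a'.isLt
    obtain ⟨rfl, -, hbb'⟩ := (hmem i b).1 ⟨rfl, hab, le_rfl⟩
    obtain ⟨-, -, hb'b⟩ := (hmem i b').2 ⟨rfl, hab', le_rfl⟩
    have ha'a : (a' : ℕ) ≤ a := ((hmem i ⟨a, hab.trans_lt b.isLt⟩).1 ⟨rfl, le_rfl, hab⟩).2.1
    have haa' : (a : ℕ) ≤ a' := ((hmem i ⟨a', hab'.trans_lt b'.isLt⟩).2 ⟨rfl, le_rfl, hab'⟩).2.1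
    obtain rfl : b = b' := Fin.ext (by omega)
    obtain rfl : a = a' := Fin.ext (by omega)
    rfl
  · obtain ⟨⟨x, hx⟩⟩ := hC'.nonempty
    exact absurd hx (by simpa [codeFinset] using Finset.ext_iff.1 h (.inl x))
  · obtain ⟨⟨x, hx⟩⟩ := hC.nonempty
    exact absurd hx (by simpa [codeFinset] using Finset.ext_iff.1 h (.inl x))
  · obtain rfl : C = C' := by
      ext x
      simpa [codeFinset] using Finset.ext_iff.1 h (.inl x)
    obtain rfl : c = c' := by
      funext i
      have hmem (q : Fin (len i)) : (q : ℕ) < c i ↔ (q : ℕ) < c' i := by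
        simpa [codeFinset] using Finset.ext_iff.1 h (.inr ⟨i, q⟩)
      have := Fin.val_le_of_ite (c i)
      have := Fin.val_le_of_ite (c' i)
      rcases lt_trichotomy (c i) (c' i) with hlt | heq | hlt
      · exact absurd ((hmem ⟨c i, by omega⟩).2 hlt) (lt_irrefl _)
      · exact heq
      · exact absurd ((hmem ⟨c' i, by omega⟩).1 hlt) (lt_irrefl _)
    rfl

lemma nonempty_connected_iff_mem_range_codeFinset {s : Finset (W ⊕ Σ i, Fin (len i))} :
    s.Nonempty ∧ ((pendantGraph H att len).induce (s : Set _)).Connected ↔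
      s ∈ Set.range (codeFinset H att) := by
  constructor
  · rintro ⟨⟨v, hv⟩, hs⟩
    rcases s.toLeft.eq_empty_or_nonempty with hW | ⟨x, hx⟩
    · rcases v with x | ⟨i, p⟩
      · exact absurd (mem_toLeft.2 hv) (by simp [hW])
      · obtain ⟨c, hc⟩ := exists_segmentCode hs.preconnected hW hv
        exact ⟨.inl c, hc⟩
    · obtain ⟨c, hc⟩ := exists_arcCode hs.preconnected (mem_toLeft.1 hx)
      exact ⟨.inr c, hc⟩
  · rintro ⟨c, rfl⟩
    have hc := connected_induce_codeFinset c
    obtain ⟨⟨v, hv⟩⟩ := hc.nonempty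
    exact ⟨⟨v, hv⟩, hc⟩

theorem numCIS_pendantGraph [Fintype W]
    [DecidablePred fun C : Finset W => (H.induce (C : Set W)).Connected] :
    numCIS (pendantGraph H att len) = ∑ i, (len i + 1).choose 2 +
      ∑ C ∈ univ.filter fun C : Finset W => (H.induce (C : Set W)).Connected,
        ∏ i, if att i ∈ C then len i + 1 else 1 := by
  rw [numCIS, Nat.card_congr (Equiv.subtypeEquivRight
      fun _ => nonempty_connected_iff_mem_range_codeFinset),
    Nat.card_range_of_injective codeFinset_injective, Nat.card_sum]
  congr 1
  · simp [Fin.sum_univ_eq_sum_range (· + 1), sum_range_add_one_eq_choose_two]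
  · rw [Nat.card_sigma]
    simp only [Nat.card_eq_fintype_card, Fintype.card_pi, Fintype.card_fin]
    rw [sum_subtype (univ.filter _) (fun C => by rw [mem_filter, and_iff_right (mem_univ C)])]

end pendantGraph

lemma cyclePendants_eq_pendantGraph (g k : ℕ) (att : Fin k → Fin g) (len : Fin k → ℕ) :
    cyclePendants g k att len = pendantGraph (cycleGraph g) att len := by
  have adj_inl_inr (x : Fin g) (j : Fin k) (q : Fin (len j)) :
      (cyclePendants g k att len).Adj (.inl x) (.inr ⟨j, q⟩) ↔ x = att j ∧ (q : ℕ) = 0 := by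
    simp only [cyclePendants, fromRel_adj]
    constructor
    · rintro ⟨-, (⟨_, _, -, ⟨⟩, -⟩ | ⟨_, _, _, ⟨⟩, -⟩ | ⟨_, _, ⟨⟩, ⟨⟩⟩) |
        (⟨_, _, ⟨⟩, -⟩ | ⟨_, _, _, -, ⟨⟩, -⟩ | ⟨_, _, ⟨⟩, -⟩)⟩
      exact ⟨rfl, rfl⟩
    · rintro ⟨rfl, hq⟩
      have hlen : 0 < len j := hq ▸ q.isLt
      obtain rfl : q = ⟨0, hlen⟩ := Fin.ext hq
      exact ⟨Sum.inl_ne_inr, .inl (.inr (.inr ⟨j, _, rfl, rfl⟩))⟩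
  ext (x | ⟨i, p⟩) (y | ⟨j, q⟩)
  · rw [pendantGraph.adj_inl_inl, cycleGraph_adj', Fin.val_sub_eq_one_iff,
      Fin.val_sub_eq_one_iff]
    simp only [cyclePendants, fromRel_adj]
    constructor
    · rintro ⟨hne, (⟨_, _, ⟨⟩, ⟨⟩, h⟩ | ⟨_, _, _, ⟨⟩, -⟩ | ⟨_, _, -, ⟨⟩⟩) |
        (⟨_, _, ⟨⟩, ⟨⟩, h⟩ | ⟨_, _, _, ⟨⟩, -⟩ | ⟨_, _, -, ⟨⟩⟩)⟩
      exacts [.inr ⟨fun h' => hne (h' ▸ rfl), h⟩, .inl ⟨fun h' => hne (h' ▸ rfl), h⟩]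
    · rintro (⟨hne, h⟩ | ⟨hne, h⟩)
      · exact ⟨fun h' => hne (Sum.inl_injective h').symm, .inr (.inl ⟨y, x, rfl, rfl, h⟩)⟩
      · exact ⟨fun h' => hne (Sum.inl_injective h'), .inl (.inl ⟨x, y, rfl, rfl, h⟩)⟩
  · exact adj_inl_inr x j q
  · rw [adj_comm, adj_inl_inr, pendantGraph.adj_inr_inl]
  · rw [pendantGraph.adj_inr_inr]
    simp only [cyclePendants, fromRel_adj]
    constructor
    · rintro ⟨-, (⟨_, _, _, ⟨⟩, -⟩ | ⟨_, _, _, ⟨⟩, ⟨⟩, h⟩ | ⟨_, _, ⟨⟩, -⟩) |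
        (⟨_, _, _, ⟨⟩, -⟩ | ⟨_, _, _, ⟨⟩, ⟨⟩, h⟩ | ⟨_, _, ⟨⟩, -⟩)⟩
      exacts [⟨rfl, .inl h⟩, ⟨rfl, .inr h⟩]
    · rintro ⟨rfl, h⟩
      have hne : (.inr ⟨i, p⟩ : Fin g ⊕ Σ i, Fin (len i)) ≠ .inr ⟨i, q⟩ := by
        rintro ⟨⟩
        omega
      rcases h with h | h
      exacts [⟨hne, .inl (.inr (.inl ⟨i, p, q, rfl, rfl, h⟩))⟩,
        ⟨hne, .inr (.inr (.inl ⟨i, q, p, rfl, rfl, h⟩))⟩]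

lemma filter_connected_induce_cycleGraph_three
    [DecidablePred fun C : Finset (Fin 3) => ((cycleGraph 3).induce (C : Set (Fin 3))).Connected] :
    univ.filter (fun C : Finset (Fin 3) => ((cycleGraph 3).induce (C : Set (Fin 3))).Connected) =
      {{0}, {1}, {2}, {0, 1}, {0, 2}, {1, 2}, {0, 1, 2}} := by
  ext C
  simp only [mem_filter, mem_univ, true_and, connected_induce_iff_forall_exists_adj]
  revert C
  decide

lemma filter_connected_induce_cycleGraph_four
    [DecidablePred fun C : Finset (Fin 4) => ((cycleGraph 4).induce (C : Set (Fin 4))).Connected] :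
    univ.filter (fun C : Finset (Fin 4) => ((cycleGraph 4).induce (C : Set (Fin 4))).Connected) =
      {{0}, {1}, {2}, {3}, {0, 1}, {0, 3}, {1, 2}, {2, 3},
        {0, 1, 2}, {0, 1, 3}, {0, 2, 3}, {1, 2, 3}, {0, 1, 2, 3}} := by
  ext C
  simp only [mem_filter, mem_univ, true_and, connected_induce_iff_forall_exists_adj]
  revert C
  decide

/-- For `n = 5m - 2` with `m > 1`, comparing `Δ_{n,n-5}` (triangle with five pendant
paths, each of `m-1` new vertices: three at `v2`, one at `v1`, one at `v0`) and
`Ω_{n,n-5}` (4-cycle with pendant paths of `m-2, m-1, m-1, m-1` new vertices at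
`v0, v1, v2, v3` and an additional pendant path of `m-1` new vertices at `v2`):
`N(Ω) - N(Δ) = m(m - 2)`. -/
theorem numCIS_Omega_sub_Delta_5m2 (m : ℕ) (hm : 1 < m) :
    numCIS (cyclePendants 4 5 ![0, 1, 2, 3, 2] ![m - 2, m - 1, m - 1, m - 1, m - 1]) =
      numCIS (cyclePendants 3 5 ![2, 2, 2, 1, 0] ![m - 1, m - 1, m - 1, m - 1, m - 1]) +
        m * (m - 2) := by
  obtain ⟨t, rfl⟩ : ∃ t, m = t + 2 := ⟨m - 2, by omega⟩
  classical
  rw [show t + 2 - 1 = t + 1 from rfl, show t + 2 - 2 = t from rfl,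
    cyclePendants_eq_pendantGraph, cyclePendants_eq_pendantGraph,
    pendantGraph.numCIS_pendantGraph, pendantGraph.numCIS_pendantGraph,
    filter_connected_induce_cycleGraph_three, filter_connected_induce_cycleGraph_four]
  simp only [Fin.sum_univ_five, Fin.prod_univ_five, Matrix.cons_val]
  simp +decide only [sum_insert, sum_singleton, mem_insert, mem_singleton, if_true, if_false]
  rw [Nat.choose_succ_succ' (t + 1), Nat.choose_one_right]
  ring
end

section
/- Let L, M, R be connected graphs, each with at least 2 vertices, with pairwise disjoint vertex sets, let l ∈ V(L), r ∈ V(R), and let u ≠ v be vertices of M. Let G be obtained by identifying l with u and r with v; let G' be obtained by identifying both l and r with u; let G'' be obtained by identifying both l and r with v. Then N(G') − N(G) = (N(R)_r − 1)(N(L)_l · N(M−v)_u − N(M−u)_v) and N(G'') − N(G) = (N(L)_l − 1)(N(R)_r · N(M−u)_v − N(M−v)_u); consequently N(G') > N(G) or N(G'') > N(G). -/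
open SimpleGraph

/-!
Let `w` be a cut vertex of `X ∪ Y`, i.e. `X ∩ Y = {w}` and no edge joins `X \ Y` to `Y \ X`.
A connected set through `w` is exactly a union `A ∪ B` of connected sets `A ⊆ X`, `B ⊆ Y`
through `w` (its traces on `X` and `Y` stay connected, since a walk leaving `X` has to come back
through `w`), while a connected set avoiding `w` lies in `X \ {w}` or in `Y \ {w}`.

Write `a = N(L)_u`, `b = N(R)_v`, let `p`, `q`, `t` count the connected subsets of `M` containing
`u` but not `v`, `v` but not `u`, and both, and let `c` be the total number of connected subsets
of `L - u`, `M - u - v` and `R - v`. Cutting at `u` and then at `v` gives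
`N(G) = a (p + t b) + q b + c`. In `G'` the three blocks hang at `u`, and the moved copy of `R` is
isomorphic to `R` via the transposition of `u` and `v`, so `N(G') = a (p + t) b + q + c`. Hence
`N(G') - N(G) = (b - 1)(a p - q)`, and symmetrically for `G''`. If neither difference were positive,
then `a p ≤ q` and `b q ≤ p`, so `a b q ≤ q`, which is impossible as `a, b ≥ 2` and `q ≥ 1`.
-/

open Set

lemma Set.ncard_sep_add_ncard_sep_not {α : Type*} [Finite α] (s : Set α) (p : α → Prop) :
    {a ∈ s | p a}.ncard + {a ∈ s | ¬ p a}.ncard = s.ncard :=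
  ncard_inter_add_ncard_sdiff_eq_ncard s {a | p a}

lemma Finset.mem_iff_mem_union_and_mem {α : Type*} [DecidableEq α] {A B : Finset α}
    {X Y : Set α} {w : α} (hA : ↑A ⊆ X) (hB : ↑B ⊆ Y) (hXY : X ∩ Y ⊆ {w}) (hwA : w ∈ A) (x : α) :
    x ∈ A ↔ x ∈ A ∪ B ∧ x ∈ X := by
  refine ⟨fun hx => ⟨Finset.mem_union_left _ hx, hA hx⟩, fun ⟨hx, hxX⟩ => ?_⟩
  rcases Finset.mem_union.1 hx with hx | hx
  exacts [hx, (hXY ⟨hxX, hB hx⟩ : x = w) ▸ hwA]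

lemma pos_or_pos_of_two_le {a b p q : ℤ} (ha : 2 ≤ a) (hb : 2 ≤ b) (hp : 1 ≤ p) (hq : 1 ≤ q) :
    0 < (b - 1) * (a * p - q) ∨ 0 < (a - 1) * (b * q - p) := by
  by_contra! hneg
  obtain ⟨h1, h2⟩ := hneg
  have hap : a * p ≤ q := by nlinarith
  have hbq : b * q ≤ p := by nlinarith
  nlinarith

namespace SimpleGraph

variable {V W : Type*}

lemma Preconnected.of_surjective_adj_or_eq {H : SimpleGraph V} {K : SimpleGraph W}
    (hH : H.Preconnected) (f : V → W) (hf : f.Surjective)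
    (hadj : ∀ a b, H.Adj a b → f a = f b ∨ K.Adj (f a) (f b)) : K.Preconnected := by
  intro x y
  obtain ⟨a, rfl⟩ := hf x
  obtain ⟨b, rfl⟩ := hf y
  rw [reachable_iff_reflTransGen]
  refine ((reachable_iff_reflTransGen a b).1 (hH a b)).lift' f fun a b hab => ?_
  rcases hadj a b hab with h | h
  · rw [Function.onFun, h]
  · exact .single h

lemma Preconnected.apply_eq_of_adj {H : SimpleGraph V} (hH : H.Preconnected) (f : V → W)
    (hf : ∀ a b, H.Adj a b → f a = f b) (a b : V) : f a = f b := by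
  have := ((reachable_iff_reflTransGen a b).1 (hH a b)).lift f (p := Eq) hf
  rwa [Relation.reflTransGen_eq_self] at this

section Cut

variable {H : SimpleGraph V} {S X Y : Set V} {w : V}

lemma subset_or_subset_of_preconnected_induce (hS : S ⊆ X ∪ Y)
    (hsep : ∀ x ∈ X, ∀ y ∈ Y, ¬ H.Adj x y) (hconn : (H.induce S).Preconnected) :
    S ⊆ X ∨ S ⊆ Y := by
  refine or_iff_not_imp_right.2 fun hSY => ?_
  obtain ⟨b, hbS, hbY⟩ := not_subset.1 hSY
  have hbX : b ∈ X := (hS hbS).resolve_right hbY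
  intro a haS
  have hside := hconn.apply_eq_of_adj (fun c : S => (c : V) ∈ X) (fun c d hcd => ?_)
    ⟨a, haS⟩ ⟨b, hbS⟩
  · simpa [hbX] using hside
  · have hcd : H.Adj c d := hcd
    by_cases hc : (c : V) ∈ X <;> by_cases hd : (d : V) ∈ X
    · simp [hc, hd]
    · exact (hsep c hc d ((hS d.2).resolve_left hd) hcd).elim
    · exact (hsep d hd c ((hS c.2).resolve_left hc) hcd.symm).elim
    · simp [hc, hd]

lemma connected_induce_inter_of_subset_union (hS : S ⊆ X ∪ Y) (hXY : X ∩ Y ⊆ {w})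
    (hwS : w ∈ S) (hwX : w ∈ X) (hsep : ∀ x ∈ X \ Y, ∀ y ∈ Y \ X, ¬ H.Adj x y)
    (hconn : (H.induce S).Connected) : (H.induce (S ∩ X)).Connected := by
  classical
  -- retract `S` onto `S ∩ X` by collapsing `S \ X` to the cut vertex `w`
  let r : S → ↥(S ∩ X) := fun a => if ha : (a : V) ∈ X then ⟨a, a.2, ha⟩ else ⟨w, hwS, hwX⟩
  have hcut : ∀ a ∈ S, a ∈ X → a ∉ Y → ∀ b ∈ S, b ∉ X → ¬ H.Adj a b :=
    fun a _ haX haY b hbS hbX => hsep a ⟨haX, haY⟩ b ⟨(hS hbS).resolve_left hbX, hbX⟩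
  refine (connected_iff _).2 ⟨hconn.preconnected.of_surjective_adj_or_eq r
    (fun b => ⟨⟨b, b.2.1⟩, by simp [r, b.2.2]⟩) fun a b hab => ?_, ⟨⟨w, hwS, hwX⟩⟩⟩
  have hab : H.Adj a b := hab
  by_cases ha : (a : V) ∈ X <;> by_cases hb : (b : V) ∈ X
  · exact .inr (by simpa [r, ha, hb] using hab)
  · have haw : (a : V) = w := hXY ⟨ha, by_contra fun haY => hcut a a.2 ha haY b b.2 hb hab⟩
    exact .inl (by simp [r, hb, haw])
  · have hbw : (b : V) = w := hXY ⟨hb, by_contra fun hbY => hcut b b.2 hb hbY a a.2 ha hab.symm⟩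
    exact .inl (by simp [r, ha, hbw])
  · exact .inl (by simp [r, ha, hb])

end Cut

/-- `N(H[X]) = (H.cisIn X).ncard`, and `N(H[X])_w` counts the members containing `w`. -/
def cisIn (H : SimpleGraph V) (X : Set V) : Set (Finset V) :=
  {S | (S : Set V) ⊆ X ∧ (H.induce (S : Set V)).Connected}

noncomputable def induceImageIso {H : SimpleGraph V} {K : SimpleGraph W} (f : V ↪ W) {s : Set V}
    (h : ∀ x ∈ s, ∀ y ∈ s, K.Adj (f x) (f y) ↔ H.Adj x y) : H.induce s ≃g K.induce (f '' s) where
  toEquiv := Equiv.Set.image f s f.injective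
  map_rel_iff' {a b} := h a a.2 b b.2

section Counting

variable {H : SimpleGraph V} {X Y : Set V} {w : V}

lemma nonempty_of_mem_cisIn {S : Finset V} (hS : S ∈ H.cisIn X) : S.Nonempty :=
  Finset.coe_nonempty.1 (nonempty_coe_sort.1 hS.2.nonempty)

lemma singleton_mem_cisIn (hw : w ∈ X) : {w} ∈ H.cisIn X := by
  refine ⟨by simpa using hw, ?_⟩
  rw [Finset.coe_singleton, induce_singleton_eq_top]
  exact connected_top

lemma cisIn_congr {K : SimpleGraph V} (h : ∀ x ∈ X, ∀ y ∈ X, H.Adj x y ↔ K.Adj x y) :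
    H.cisIn X = K.cisIn X := by
  ext S
  refine and_congr_right fun hSX => ?_
  rw [show H.induce (S : Set V) = K.induce S from
    SimpleGraph.ext <| funext₂ fun a b => propext (h a (hSX a.2) b (hSX b.2))]

lemma cisIn_union_of_forall_not_adj (hsep : ∀ x ∈ X, ∀ y ∈ Y, ¬ H.Adj x y) :
    H.cisIn (X ∪ Y) = H.cisIn X ∪ H.cisIn Y := by
  ext S
  constructor
  · rintro ⟨hS, hconn⟩
    exact (subset_or_subset_of_preconnected_induce hS hsep hconn.preconnected).imp
      (fun h => ⟨h, hconn⟩) (fun h => ⟨h, hconn⟩)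
  · rintro (⟨hS, hconn⟩ | ⟨hS, hconn⟩)
    exacts [⟨hS.trans subset_union_left, hconn⟩, ⟨hS.trans subset_union_right, hconn⟩]

lemma disjoint_cisIn (hXY : Disjoint X Y) : Disjoint (H.cisIn X) (H.cisIn Y) :=
  Set.disjoint_left.2 fun _ hX hY =>
    let ⟨_, hx⟩ := nonempty_of_mem_cisIn hX
    Set.disjoint_left.1 hXY (hX.1 hx) (hY.1 hx)

lemma sep_mem_cisIn_union_of_notMem (hsep : ∀ x ∈ X, ∀ y ∈ Y, ¬ H.Adj x y) (hw : w ∉ Y) :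
    {S ∈ H.cisIn (X ∪ Y) | w ∈ S} = {S ∈ H.cisIn X | w ∈ S} := by
  rw [cisIn_union_of_forall_not_adj hsep]
  ext S
  simp only [mem_ofPred_eq, mem_union, or_and_right, or_iff_left_iff_imp, and_imp]
  exact fun hS hwS => (hw (hS.1 hwS)).elim

lemma sep_notMem_cisIn (z : V) : {S ∈ H.cisIn X | z ∉ S} = H.cisIn (X \ {z}) := by
  ext S
  simp only [cisIn, mem_ofPred_eq, subset_sdiff, disjoint_singleton_right, Finset.mem_coe]
  tauto

lemma image_union_prod_sep_mem_cisIn [DecidableEq V] (hXY : X ∩ Y = {w})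
    (hsep : ∀ x ∈ X \ Y, ∀ y ∈ Y \ X, ¬ H.Adj x y) {z : V} (hz : z ∈ X) :
    (fun p : Finset V × Finset V => p.1 ∪ p.2) ''
        ({A ∈ H.cisIn X | z ∈ A ∧ w ∈ A} ×ˢ {B ∈ H.cisIn Y | w ∈ B}) =
      {S ∈ H.cisIn (X ∪ Y) | z ∈ S ∧ w ∈ S} := by
  classical
  have hw : w ∈ X ∩ Y := hXY ▸ rfl
  ext S
  constructor
  · rintro ⟨⟨A, B⟩, ⟨⟨⟨hA, hAc⟩, hzA, hwA⟩, ⟨hB, hBc⟩, hwB⟩, rfl⟩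
    refine ⟨⟨?_, ?_⟩, Finset.mem_union_left _ hzA, Finset.mem_union_left _ hwA⟩
    · rw [Finset.coe_union]
      exact union_subset_union hA hB
    · rw [Finset.coe_union]
      exact induce_union_connected hAc.preconnected hBc.preconnected ⟨w, hwA, hwB⟩
  · rintro ⟨⟨hS, hconn⟩, hzS, hwS⟩
    refine ⟨(S.filter (· ∈ X), S.filter (· ∈ Y)), ⟨⟨⟨fun x hx => (Finset.mem_filter.1 hx).2, ?_⟩,
      Finset.mem_filter.2 ⟨hzS, hz⟩, Finset.mem_filter.2 ⟨hwS, hw.1⟩⟩,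
      ⟨fun x hx => (Finset.mem_filter.1 hx).2, ?_⟩, Finset.mem_filter.2 ⟨hwS, hw.2⟩⟩, ?_⟩
    · rw [Finset.coe_filter]
      exact connected_induce_inter_of_subset_union hS hXY.le hwS hw.1 hsep hconn
    · rw [Finset.coe_filter]
      exact connected_induce_inter_of_subset_union (union_comm X Y ▸ hS)
        (inter_comm X Y ▸ hXY.le) hwS hw.2 (fun y hy x hx h => hsep x hx y hy h.symm) hconn
    · show S.filter (· ∈ X) ∪ S.filter (· ∈ Y) = S
      rw [← Finset.filter_or]
      exact Finset.filter_true_of_mem fun x hx => hS hx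

lemma ncard_sep_mem_cisIn_union (hXY : X ∩ Y = {w})
    (hsep : ∀ x ∈ X \ Y, ∀ y ∈ Y \ X, ¬ H.Adj x y) {z : V} (hz : z ∈ X) :
    {S ∈ H.cisIn (X ∪ Y) | z ∈ S ∧ w ∈ S}.ncard =
      {A ∈ H.cisIn X | z ∈ A ∧ w ∈ A}.ncard * {B ∈ H.cisIn Y | w ∈ B}.ncard := by
  classical
  rw [← image_union_prod_sep_mem_cisIn hXY hsep hz, ← ncard_prod]
  refine InjOn.ncard_image ?_
  rintro ⟨A, B⟩ ⟨⟨⟨hA, -⟩, -, hwA⟩, ⟨hB, -⟩, hwB⟩ ⟨A', B'⟩ ⟨⟨⟨hA', -⟩, -, hwA'⟩, ⟨hB', -⟩, hwB'⟩ h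
  have h : A ∪ B = A' ∪ B' := h
  have hYX : Y ∩ X ⊆ {w} := inter_comm X Y ▸ hXY.le
  ext x
  · rw [Finset.mem_iff_mem_union_and_mem hA hB hXY.le hwA,
      Finset.mem_iff_mem_union_and_mem hA' hB' hXY.le hwA', h]
  · rw [Finset.mem_iff_mem_union_and_mem hB hA hYX hwB,
      Finset.mem_iff_mem_union_and_mem hB' hA' hYX hwB', Finset.union_comm, h, Finset.union_comm]

lemma image_map_cisIn {K : SimpleGraph W} (f : V ↪ W)
    (h : ∀ x ∈ X, ∀ y ∈ X, K.Adj (f x) (f y) ↔ H.Adj x y) :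
    Finset.map f '' H.cisIn X = K.cisIn (f '' X) := by
  classical
  ext T
  constructor
  · rintro ⟨S, ⟨hSX, hS⟩, rfl⟩
    rw [cisIn, mem_ofPred_eq, Finset.coe_map]
    exact ⟨image_mono hSX,
      (induceImageIso f fun x hx y hy => h x (hSX hx) y (hSX hy)).connected_iff.1 hS⟩
  · rintro ⟨hTX, hT⟩
    obtain ⟨S, hSX, rfl⟩ := Finset.subset_set_image_iff.1 hTX
    rw [← Finset.map_eq_image] at hT ⊢
    rw [Finset.coe_map] at hT
    exact ⟨S, ⟨hSX,
      (induceImageIso f fun x hx y hy => h x (hSX hx) y (hSX hy)).connected_iff.2 hT⟩, rfl⟩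

lemma ncard_cisIn_map {K : SimpleGraph W} (f : V ↪ W)
    (h : ∀ x ∈ X, ∀ y ∈ X, K.Adj (f x) (f y) ↔ H.Adj x y) :
    (K.cisIn (f '' X)).ncard = (H.cisIn X).ncard := by
  rw [← image_map_cisIn f h, ncard_image_of_injective _ (Finset.map_injective f)]

lemma ncard_sep_mem_cisIn_map {K : SimpleGraph W} (f : V ↪ W)
    (h : ∀ x ∈ X, ∀ y ∈ X, K.Adj (f x) (f y) ↔ H.Adj x y) (w : V) :
    {T ∈ K.cisIn (f '' X) | f w ∈ T}.ncard = {S ∈ H.cisIn X | w ∈ S}.ncard := by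
  rw [← image_map_cisIn f h, ← ncard_image_of_injective _ (Finset.map_injective f)]
  congr 1
  ext T
  constructor
  · rintro ⟨⟨S, hS, rfl⟩, hw⟩
    exact ⟨S, ⟨hS, (Finset.mem_map' f).1 hw⟩, rfl⟩
  · rintro ⟨S, ⟨hS, hw⟩, rfl⟩
    exact ⟨⟨S, hS, rfl⟩, (Finset.mem_map' f).2 hw⟩

lemma numCIS_eq_ncard_cisIn (H : SimpleGraph V) : numCIS H = (H.cisIn univ).ncard :=
  Nat.card_congr <| Equiv.subtypeEquivRight fun _ =>
    ⟨fun h => ⟨subset_univ _, h.2⟩, fun h => ⟨nonempty_of_mem_cisIn h, h.2⟩⟩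

lemma numCISat_eq_ncard_cisIn (H : SimpleGraph V) (w : V) :
    numCISat H w = {S ∈ H.cisIn univ | w ∈ S}.ncard :=
  Nat.card_congr <| Equiv.subtypeEquivRight fun _ =>
    ⟨fun h => ⟨⟨subset_univ _, h.2⟩, h.1⟩, fun h => ⟨h.2, h.1.2⟩⟩

lemma numCISat_induce (H : SimpleGraph V) (s : Set V) (w : s) :
    numCISat (H.induce s) w = {S ∈ H.cisIn s | ↑w ∈ S}.ncard := by
  rw [numCISat_eq_ncard_cisIn, ← ncard_sep_mem_cisIn_map (Function.Embedding.subtype _)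
    (fun _ _ _ _ => Iff.rfl), image_univ, Function.Embedding.coe_subtype, Subtype.range_coe]

variable [Finite V]

lemma ncard_cisIn_union_of_disjoint (hXY : Disjoint X Y)
    (hsep : ∀ x ∈ X, ∀ y ∈ Y, ¬ H.Adj x y) :
    (H.cisIn (X ∪ Y)).ncard = (H.cisIn X).ncard + (H.cisIn Y).ncard := by
  rw [cisIn_union_of_forall_not_adj hsep, ncard_union_eq (disjoint_cisIn hXY)]

lemma ncard_cisIn_eq_add (z : V) :
    (H.cisIn X).ncard = {S ∈ H.cisIn X | z ∈ S}.ncard + (H.cisIn (X \ {z})).ncard := by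
  rw [← sep_notMem_cisIn, ncard_sep_add_ncard_sep_not]

lemma ncard_sep_mem_cisIn_eq_add (w z : V) :
    {S ∈ H.cisIn X | w ∈ S}.ncard =
      {S ∈ H.cisIn X | w ∈ S ∧ z ∈ S}.ncard + {S ∈ H.cisIn (X \ {z}) | w ∈ S}.ncard := by
  rw [← ncard_sep_add_ncard_sep_not {S ∈ H.cisIn X | w ∈ S} (z ∈ ·), ← sep_notMem_cisIn]
  congr 2 <;> ext S <;> simp only [mem_ofPred_eq] <;> tauto

lemma ncard_cisIn_union_of_inter_eq_singleton (hXY : X ∩ Y = {w})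
    (hsep : ∀ x ∈ X \ Y, ∀ y ∈ Y \ X, ¬ H.Adj x y) :
    (H.cisIn (X ∪ Y)).ncard =
      {A ∈ H.cisIn X | w ∈ A}.ncard * {B ∈ H.cisIn Y | w ∈ B}.ncard +
        (H.cisIn (X \ {w})).ncard + (H.cisIn (Y \ {w})).ncard := by
  have hw : w ∈ X ∩ Y := hXY ▸ rfl
  have hprod := ncard_sep_mem_cisIn_union hXY hsep hw.1
  simp only [and_self] at hprod
  have hcut : ∀ x ∈ X \ {w}, x ∉ Y := fun x hx hxY => hx.2 (hXY.le ⟨hx.1, hxY⟩)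
  have hcut' : ∀ y ∈ Y \ {w}, y ∉ X := fun y hy hyX => hy.2 (hXY.le ⟨hyX, hy.1⟩)
  rw [ncard_cisIn_eq_add w, hprod, union_sdiff_distrib, add_assoc,
    ncard_cisIn_union_of_disjoint (Set.disjoint_left.2 fun x hx hy => hcut x hx hy.1)
      fun x hx y hy => hsep x ⟨hx.1, hcut x hx⟩ y ⟨hy.1, hcut' y hy⟩]

lemma one_le_numCISat (H : SimpleGraph V) (w : V) : 1 ≤ numCISat H w := by
  rw [numCISat_eq_ncard_cisIn, Nat.one_le_iff_ne_zero]
  exact ncard_ne_zero_of_mem ⟨singleton_mem_cisIn (mem_univ w), Finset.mem_singleton_self w⟩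

lemma two_le_numCISat (hH : H.Connected) (hV : 2 ≤ Nat.card V) (w : V) :
    2 ≤ numCISat H w := by
  have := Fintype.ofFinite V
  rw [numCISat_eq_ncard_cisIn]
  refine (one_lt_ncard).2 ⟨{w}, ⟨singleton_mem_cisIn (mem_univ w), Finset.mem_singleton_self w⟩,
    Finset.univ, ⟨⟨subset_univ _, ?_⟩, Finset.mem_univ w⟩, fun h => ?_⟩
  · rw [Finset.coe_univ]
    exact H.induceUnivIso.connected_iff.2 hH
  · have := congrArg Finset.card h
    rw [Finset.card_singleton, Finset.card_univ, ← Nat.card_eq_fintype_card] at this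
    omega

end Counting

/-- The blocks `X`, `M`, `Y` play the roles of `L`, `M`, `R`; allowing `u = v` also covers three
blocks hanging at a single vertex. -/
structure IsGluing (G : SimpleGraph V) (X M Y : Set V) (u v : V) : Prop where
  cover : X ∪ M ∪ Y = univ
  inter_left : X ∩ M = {u}
  inter_right : M ∩ Y = {v}
  inter_ends : X ∩ Y ⊆ M
  adj : ∀ x y, G.Adj x y → (x ∈ X ∧ y ∈ X) ∨ (x ∈ M ∧ y ∈ M) ∨ (x ∈ Y ∧ y ∈ Y)

/-- `G` with the block `Y` detached from `v` and reattached at `u`: an edge `v y` of `Y` becomes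
`u y`. This is `G'`, and `G''` is `G.reattach R M L v u`. -/
def reattach (G : SimpleGraph V) (X M Y : Set V) (u v : V) : SimpleGraph V :=
  fromRel fun x y => (x ∈ X ∧ y ∈ X ∧ G.Adj x y) ∨ (x ∈ M ∧ y ∈ M ∧ G.Adj x y) ∨
    (x ∈ Y ∧ y ∈ Y ∧ x ≠ v ∧ y ≠ v ∧ G.Adj x y) ∨ (x = u ∧ y ∈ Y ∧ G.Adj v y)

namespace IsGluing

variable {G : SimpleGraph V} {X M Y : Set V} {u v : V}

lemma symm (h : G.IsGluing X M Y u v) : G.IsGluing Y M X v u where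
  cover := by rw [← h.cover]; ext; simp only [mem_union]; tauto
  inter_left := by rw [inter_comm, h.inter_right]
  inter_right := by rw [inter_comm, h.inter_left]
  inter_ends := by rw [inter_comm]; exact h.inter_ends
  adj x y hxy := by have := h.adj x y hxy; tauto

lemma mem_left (h : G.IsGluing X M Y u v) : u ∈ X := (h.inter_left.ge rfl).1
lemma mem_mid_left (h : G.IsGluing X M Y u v) : u ∈ M := (h.inter_left.ge rfl).2
lemma mem_mid_right (h : G.IsGluing X M Y u v) : v ∈ M := (h.inter_right.ge rfl).1
lemma mem_right (h : G.IsGluing X M Y u v) : v ∈ Y := (h.inter_right.ge rfl).2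

lemma eq_of_mem_left (h : G.IsGluing X M Y u v) {x : V} (hX : x ∈ X) (hM : x ∈ M) : x = u :=
  h.inter_left.le ⟨hX, hM⟩

lemma eq_of_mem_right (h : G.IsGluing X M Y u v) {x : V} (hM : x ∈ M) (hY : x ∈ Y) : x = v :=
  h.inter_right.le ⟨hM, hY⟩

lemma eq_of_mem_ends (h : G.IsGluing X M Y u v) {x : V} (hX : x ∈ X) (hY : x ∈ Y) :
    x = u ∧ x = v :=
  ⟨h.eq_of_mem_left hX (h.inter_ends ⟨hX, hY⟩), h.eq_of_mem_right (h.inter_ends ⟨hX, hY⟩) hY⟩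

lemma inter_mid_union_right (h : G.IsGluing X M Y u v) : X ∩ (M ∪ Y) = {u} := by
  rw [inter_union_distrib_left, h.inter_left, union_eq_left]
  exact fun x hx => (h.eq_of_mem_ends hx.1 hx.2).1

lemma reattach_adj_iff_of_mem_left (h : G.IsGluing X M Y u v) {x y : V} (hx : x ∈ X)
    (hy : y ∈ X) : (G.reattach X M Y u v).Adj x y ↔ G.Adj x y := by
  simp only [reattach, fromRel_adj]
  grind [G.adj_comm, Adj.ne, G.irrefl, h.mem_mid_left, h.eq_of_mem_left, h.eq_of_mem_right,
    h.eq_of_mem_ends]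

lemma reattach_adj_iff_of_mem_mid (h : G.IsGluing X M Y u v) {x y : V} (hx : x ∈ M)
    (hy : y ∈ M) : (G.reattach X M Y u v).Adj x y ↔ G.Adj x y := by
  simp only [reattach, fromRel_adj]
  grind [G.adj_comm, Adj.ne, G.irrefl, h.mem_mid_left, h.eq_of_mem_left, h.eq_of_mem_right,
    h.eq_of_mem_ends]

lemma reattach_adj_swap_iff [DecidableEq V] (h : G.IsGluing X M Y u v) {x y : V}
    (hx : x ∈ Y) (hy : y ∈ Y) :
    (G.reattach X M Y u v).Adj (Equiv.swap u v x) (Equiv.swap u v y) ↔ G.Adj x y := by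
  simp only [reattach, fromRel_adj, Equiv.swap_apply_def]
  grind [G.adj_comm, Adj.ne, G.irrefl, h.mem_mid_left, h.eq_of_mem_left, h.eq_of_mem_right,
    h.eq_of_mem_ends]

lemma reattach [DecidableEq V] (h : G.IsGluing X M Y u v) :
    (G.reattach X M Y u v).IsGluing X M (Equiv.swap u v '' Y) u u := by
  have := h.mem_right
  have := h.mem_mid_left
  have := h.mem_mid_right
  have := @h.eq_of_mem_right
  have := @h.eq_of_mem_ends
  refine ⟨?_, h.inter_left, ?_, ?_, fun x y hxy => ?_⟩
  · ext x
    have : x ∈ X ∪ M ∪ Y := by simp [h.cover]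
    simp only [mem_union, mem_image_equiv, Equiv.symm_swap, Equiv.swap_apply_def, mem_univ,
      iff_true]
    grind
  · ext x
    simp only [mem_inter_iff, mem_image_equiv, Equiv.symm_swap, Equiv.swap_apply_def,
      mem_singleton_iff]
    grind
  · intro x
    simp only [mem_inter_iff, mem_image_equiv, Equiv.symm_swap, Equiv.swap_apply_def]
    grind
  · simp only [SimpleGraph.reattach, fromRel_adj, mem_image_equiv, Equiv.symm_swap,
      Equiv.swap_apply_def] at hxy ⊢
    grind

variable [Finite V]

lemma ncard_cisIn_univ_of_ne (h : G.IsGluing X M Y u v) (huv : u ≠ v) :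
    (G.cisIn univ).ncard =
      {S ∈ G.cisIn X | u ∈ S}.ncard *
          ({S ∈ G.cisIn M | u ∈ S ∧ v ∈ S}.ncard * {S ∈ G.cisIn Y | v ∈ S}.ncard +
            {S ∈ G.cisIn (M \ {v}) | u ∈ S}.ncard) +
        (G.cisIn (X \ {u})).ncard +
        ({S ∈ G.cisIn (M \ {u}) | v ∈ S}.ncard * {S ∈ G.cisIn Y | v ∈ S}.ncard +
          (G.cisIn ((M \ {u}) \ {v})).ncard + (G.cisIn (Y \ {v})).ncard) := by
  have huY : u ∉ Y := fun huY => huv (h.eq_of_mem_right h.mem_mid_left huY)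
  have hMY : (M \ {u}) ∩ Y = {v} := by
    rw [sdiff_inter_right_comm, h.inter_right,
      sdiff_singleton_eq_self (mem_singleton_iff.not.2 huv)]
  rw [← h.cover, union_assoc,
    ncard_cisIn_union_of_inter_eq_singleton h.inter_mid_union_right ?sep1,
    ncard_sep_mem_cisIn_eq_add (X := M ∪ Y) u v,
    ncard_sep_mem_cisIn_union h.inter_right ?sep2 h.mem_mid_left, union_sdiff_distrib,
    sep_mem_cisIn_union_of_notMem ?sep3 (fun hu => huY hu.1), union_sdiff_distrib,
    sdiff_singleton_eq_self huY, ncard_cisIn_union_of_inter_eq_singleton hMY ?sep4]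
  all_goals
    intro x hx y hy hxy
    have := h.adj x y hxy
    grind [h.eq_of_mem_left, h.eq_of_mem_right, h.eq_of_mem_ends]

lemma ncard_cisIn_univ_self (h : G.IsGluing X M Y u u) :
    (G.cisIn univ).ncard =
      {S ∈ G.cisIn X | u ∈ S}.ncard *
          ({S ∈ G.cisIn M | u ∈ S}.ncard * {S ∈ G.cisIn Y | u ∈ S}.ncard) +
        (G.cisIn (X \ {u})).ncard + ((G.cisIn (M \ {u})).ncard + (G.cisIn (Y \ {u})).ncard) := by
  have hprod := ncard_sep_mem_cisIn_union (H := G) h.inter_right ?sep1 h.mem_mid_left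
  simp only [and_self] at hprod
  rw [← h.cover, union_assoc,
    ncard_cisIn_union_of_inter_eq_singleton h.inter_mid_union_right ?sep2, hprod,
    union_sdiff_distrib, ncard_cisIn_union_of_disjoint ?disj ?sep3]
  case disj => exact Set.disjoint_left.2 fun x hM hY => hM.2 (h.eq_of_mem_right hM.1 hY.1)
  all_goals
    intro x hx y hy hxy
    have := h.adj x y hxy
    grind [h.eq_of_mem_left, h.eq_of_mem_right, h.eq_of_mem_ends]

theorem numCIS_reattach_sub (h : G.IsGluing X M Y u v) (huv : u ≠ v) :
    (numCIS (G.reattach X M Y u v) : ℤ) - numCIS G =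
      ((numCISat (G.induce Y) ⟨v, h.mem_right⟩ : ℤ) - 1) *
        ((numCISat (G.induce X) ⟨u, h.mem_left⟩ : ℤ) *
            numCISat (G.induce (M \ {v})) ⟨u, h.mem_mid_left, huv⟩ -
          numCISat (G.induce (M \ {u})) ⟨v, h.mem_mid_right, huv.symm⟩) := by
  classical
  have hX : (G.reattach X M Y u v).cisIn X = G.cisIn X :=
    cisIn_congr fun x hx y hy => h.reattach_adj_iff_of_mem_left hx hy
  have hXu : (G.reattach X M Y u v).cisIn (X \ {u}) = G.cisIn (X \ {u}) :=
    cisIn_congr fun x hx y hy => h.reattach_adj_iff_of_mem_left hx.1 hy.1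
  have hM : (G.reattach X M Y u v).cisIn M = G.cisIn M :=
    cisIn_congr fun x hx y hy => h.reattach_adj_iff_of_mem_mid hx hy
  have hMu : (G.reattach X M Y u v).cisIn (M \ {u}) = G.cisIn (M \ {u}) :=
    cisIn_congr fun x hx y hy => h.reattach_adj_iff_of_mem_mid hx.1 hy.1
  have hY : {S ∈ (G.reattach X M Y u v).cisIn (Equiv.swap u v '' Y) | u ∈ S}.ncard =
      {S ∈ G.cisIn Y | v ∈ S}.ncard := by
    rw [← ncard_sep_mem_cisIn_map (Equiv.swap u v).toEmbedding
      (fun x hx y hy => h.reattach_adj_swap_iff hx hy) v]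
    simp
  have hYu : ((G.reattach X M Y u v).cisIn (Equiv.swap u v '' Y \ {u})).ncard =
      (G.cisIn (Y \ {v})).ncard := by
    rw [← ncard_cisIn_map (Equiv.swap u v).toEmbedding
      (fun x hx y hy => h.reattach_adj_swap_iff hx.1 hy.1)]
    simp [image_sdiff (Equiv.injective _)]
  rw [numCIS_eq_ncard_cisIn, numCIS_eq_ncard_cisIn, h.reattach.ncard_cisIn_univ_self,
    h.ncard_cisIn_univ_of_ne huv, hX, hXu, hM, hMu, hY, hYu,
    ncard_sep_mem_cisIn_eq_add (X := M) u v, ncard_cisIn_eq_add (X := M \ {u}) v]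
  simp only [numCISat_induce]
  push_cast
  ring

end IsGluing

end SimpleGraph

theorem numCIS_reattach_general {V : Type*} [Fintype V] (G : SimpleGraph V) (SL SM SR : Set V)
    (u v : V) (huv : u ≠ v)
    (hcover : SL ∪ SM ∪ SR = Set.univ)
    (hLM : SL ∩ SM = {u}) (hMR : SM ∩ SR = {v}) (hLR : SL ∩ SR = ∅)
    (huL : u ∈ SL) (huM : u ∈ SM) (hvM : v ∈ SM) (hvR : v ∈ SR)
    (hedges : ∀ x y, G.Adj x y →
      (x ∈ SL ∧ y ∈ SL) ∨ (x ∈ SM ∧ y ∈ SM) ∨ (x ∈ SR ∧ y ∈ SR))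
    (hL : (G.induce SL).Connected)
    (hR : (G.induce SR).Connected)
    (hLcard : 2 ≤ Nat.card SL) (hRcard : 2 ≤ Nat.card SR) :
    let G' : SimpleGraph V := SimpleGraph.fromRel (fun x y =>
      (x ∈ SL ∧ y ∈ SL ∧ G.Adj x y) ∨ (x ∈ SM ∧ y ∈ SM ∧ G.Adj x y) ∨
      (x ∈ SR ∧ y ∈ SR ∧ x ≠ v ∧ y ≠ v ∧ G.Adj x y) ∨
      (x = u ∧ y ∈ SR ∧ G.Adj v y));
    let G'' : SimpleGraph V := SimpleGraph.fromRel (fun x y =>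
      (x ∈ SL ∧ y ∈ SL ∧ x ≠ u ∧ y ≠ u ∧ G.Adj x y) ∨
      (x ∈ SM ∧ y ∈ SM ∧ G.Adj x y) ∨ (x ∈ SR ∧ y ∈ SR ∧ G.Adj x y) ∨
      (x = v ∧ y ∈ SL ∧ G.Adj u y));
    ((numCIS G' : ℤ) - numCIS G =
        ((numCISat (G.induce SR) ⟨v, hvR⟩ : ℤ) - 1) *
          ((numCISat (G.induce SL) ⟨u, huL⟩ : ℤ) *
              numCISat (G.induce (SM \ {v})) ⟨u, ⟨huM, huv⟩⟩ -
            numCISat (G.induce (SM \ {u})) ⟨v, ⟨hvM, fun h => huv h.symm⟩⟩)) ∧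
    ((numCIS G'' : ℤ) - numCIS G =
        ((numCISat (G.induce SL) ⟨u, huL⟩ : ℤ) - 1) *
          ((numCISat (G.induce SR) ⟨v, hvR⟩ : ℤ) *
              numCISat (G.induce (SM \ {u})) ⟨v, ⟨hvM, fun h => huv h.symm⟩⟩ -
            numCISat (G.induce (SM \ {v})) ⟨u, ⟨huM, huv⟩⟩)) ∧
    (numCIS G < numCIS G' ∨ numCIS G < numCIS G'') := by
  intro G' G''
  have h : G.IsGluing SL SM SR u v := ⟨hcover, hLM, hMR, hLR ▸ empty_subset _, hedges⟩
  have hG''_eq : G'' = G.reattach SR SM SL v u := by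
    simp only [G'', reattach]
    congr
    ext x y
    tauto
  have hG' : (numCIS G' : ℤ) - numCIS G = _ := h.numCIS_reattach_sub huv
  have hG'' : (numCIS G'' : ℤ) - numCIS G = _ := hG''_eq ▸ h.symm.numCIS_reattach_sub huv.symm
  refine ⟨hG', hG'', ?_⟩
  have ha : (2 : ℤ) ≤ numCISat (G.induce SL) ⟨u, huL⟩ := mod_cast two_le_numCISat hL hLcard _
  have hb : (2 : ℤ) ≤ numCISat (G.induce SR) ⟨v, hvR⟩ := mod_cast two_le_numCISat hR hRcard _
  have hp : (1 : ℤ) ≤ numCISat (G.induce (SM \ {v})) ⟨u, huM, huv⟩ := mod_cast one_le_numCISat _ _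
  have hq : (1 : ℤ) ≤ numCISat (G.induce (SM \ {u})) ⟨v, hvM, huv.symm⟩ :=
    mod_cast one_le_numCISat _ _
  rcases pos_or_pos_of_two_le ha hb hp hq with hpos | hpos
  · exact .inl (by rw [← hG'] at hpos; omega)
  · exact .inr (by rw [← hG''] at hpos; omega)

/-- Lemma on merging: `G` decomposes into connected pieces `L = G.induce SL`,
`M = G.induce SM`, `R = G.induce SR` (each with at least two vertices), overlapping only
in `SL ∩ SM = {u}` and `SM ∩ SR = {v}`.  Let `G'` be the graph in which `R` is
re-attached at `u` instead of `v`, and `G''` the graph in which `L` is re-attached at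
`v` instead of `u`.  Then
`N(G') - N(G) = (N(R)_r - 1)(N(L)_l·N(M-v)_u - N(M-u)_v)` and
`N(G'') - N(G) = (N(L)_l - 1)(N(R)_r·N(M-u)_v - N(M-v)_u)`; consequently
`N(G') > N(G)` or `N(G'') > N(G)`. -/
theorem numCIS_reattach {V : Type*} [Fintype V] (G : SimpleGraph V) (SL SM SR : Set V)
    (u v : V) (huv : u ≠ v)
    (hcover : SL ∪ SM ∪ SR = Set.univ)
    (hLM : SL ∩ SM = {u}) (hMR : SM ∩ SR = {v}) (hLR : SL ∩ SR = ∅)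
    (huL : u ∈ SL) (huM : u ∈ SM) (hvM : v ∈ SM) (hvR : v ∈ SR)
    (hedges : ∀ x y, G.Adj x y →
      (x ∈ SL ∧ y ∈ SL) ∨ (x ∈ SM ∧ y ∈ SM) ∨ (x ∈ SR ∧ y ∈ SR))
    (hL : (G.induce SL).Connected) (hM : (G.induce SM).Connected)
    (hR : (G.induce SR).Connected)
    (hLcard : 2 ≤ Nat.card SL) (hMcard : 2 ≤ Nat.card SM) (hRcard : 2 ≤ Nat.card SR) :
    let G' : SimpleGraph V := SimpleGraph.fromRel (fun x y =>
      (x ∈ SL ∧ y ∈ SL ∧ G.Adj x y) ∨ (x ∈ SM ∧ y ∈ SM ∧ G.Adj x y) ∨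
      (x ∈ SR ∧ y ∈ SR ∧ x ≠ v ∧ y ≠ v ∧ G.Adj x y) ∨
      (x = u ∧ y ∈ SR ∧ G.Adj v y));
    let G'' : SimpleGraph V := SimpleGraph.fromRel (fun x y =>
      (x ∈ SL ∧ y ∈ SL ∧ x ≠ u ∧ y ≠ u ∧ G.Adj x y) ∨
      (x ∈ SM ∧ y ∈ SM ∧ G.Adj x y) ∨ (x ∈ SR ∧ y ∈ SR ∧ G.Adj x y) ∨
      (x = v ∧ y ∈ SL ∧ G.Adj u y));
    ((numCIS G' : ℤ) - numCIS G =
        ((numCISat (G.induce SR) ⟨v, hvR⟩ : ℤ) - 1) *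
          ((numCISat (G.induce SL) ⟨u, huL⟩ : ℤ) *
              numCISat (G.induce (SM \ {v})) ⟨u, ⟨huM, huv⟩⟩ -
            numCISat (G.induce (SM \ {u})) ⟨v, ⟨hvM, fun h => huv h.symm⟩⟩)) ∧
    ((numCIS G'' : ℤ) - numCIS G =
        ((numCISat (G.induce SL) ⟨u, huL⟩ : ℤ) - 1) *
          ((numCISat (G.induce SR) ⟨v, hvR⟩ : ℤ) *
              numCISat (G.induce (SM \ {u})) ⟨v, ⟨hvM, fun h => huv h.symm⟩⟩ -
            numCISat (G.induce (SM \ {v})) ⟨u, ⟨huM, huv⟩⟩)) ∧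
    (numCIS G < numCIS G' ∨ numCIS G < numCIS G'') :=
  numCIS_reattach_general G SL SM SR u v huv hcover hLM hMR hLR huL huM hvM hvR hedges hL hR hLcard
    hRcard
end

section
/- Let H1 be the graph obtained from the 4-cycle v0v1v2v3 by attaching pendant paths of orders n0, n0, n0−1, n0−1 at v0, v1, v2, v3 respectively, and H2 the graph obtained from the same 4-cycle by attaching pendant paths of orders n0, n0−1, n0, n0−1 at v0, v1, v2, v3 respectively, where n0 ≥ 2. Then N(H1) − N(H2) = 1; in particular placing the two longer pendant paths at adjacent cycle vertices yields strictly more connected induced subgraphs than placing them at opposite vertices. -/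
/-!
A connected induced subgraph either avoids the 4-cycle, and is then a segment of a single pendant
path, or meets it in an arc `T` (a nonempty set of cycle vertices other than a diagonal pair),
together with an initial segment of the pendant path at each vertex of `T`, where the path at `i`
contributes `aᵢ = lᵢ + 1` choices. Hence `N = ∑ᵢ #(segments of path i) + ∑_T ∏_{i ∈ T} aᵢ`,
and the arc sum is `e₁(a) + (a₀ + a₂)(a₁ + a₃) + e₃(a) + e₄(a)`. Everything except the middle
term is symmetric in the path orders; for the two placements it equals `(2n₀ + 1)²` and
`(2n₀ + 2) · 2n₀` respectively.
-/

open SimpleGraph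

namespace SimpleGraph

variable {V : Type*} {G : SimpleGraph V} {s A : Set V}

theorem Preconnected.exists_adj_boundary_of_induce (hs : (G.induce s).Preconnected)
    {u v : V} (hu : u ∈ s) (hv : v ∈ s) (huA : u ∈ A) (hvA : v ∉ A) :
    ∃ a ∈ s, ∃ b ∈ s, a ∈ A ∧ b ∉ A ∧ G.Adj a b := by
  obtain ⟨w⟩ := hs ⟨u, hu⟩ ⟨v, hv⟩
  obtain ⟨d, -, hdA, hdA'⟩ := w.exists_boundary_dart (Subtype.val ⁻¹' A) huA hvA
  exact ⟨d.fst, d.fst.2, d.snd, d.snd.2, hdA, hdA', d.adj⟩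

def ReachIn (G : SimpleGraph V) (s : Set V) (u v : V) : Prop :=
  ∃ (hu : u ∈ s) (hv : v ∈ s), (G.induce s).Reachable ⟨u, hu⟩ ⟨v, hv⟩

namespace ReachIn

theorem refl {u : V} (hu : u ∈ s) : G.ReachIn s u u := ⟨hu, hu, .rfl⟩

theorem of_adj {u v : V} (hu : u ∈ s) (hv : v ∈ s) (h : G.Adj u v) : G.ReachIn s u v :=
  ⟨hu, hv, Adj.reachable (G := G.induce s) h⟩

theorem symm {u v : V} (h : G.ReachIn s u v) : G.ReachIn s v u :=
  let ⟨hu, hv, r⟩ := h; ⟨hv, hu, r.symm⟩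

theorem trans {u v w : V} (h : G.ReachIn s u v) (h' : G.ReachIn s v w) : G.ReachIn s u w :=
  let ⟨hu, _, r⟩ := h; let ⟨_, hw, r'⟩ := h'; ⟨hu, hw, r.trans r'⟩

end ReachIn

theorem induce_connected_of_forall_reachIn {u : V} (hu : u ∈ s)
    (h : ∀ v ∈ s, G.ReachIn s u v) : (G.induce s).Connected :=
  (connected_iff_exists_forall_reachable _).2
    ⟨⟨u, hu⟩, fun ⟨v, hv⟩ => let ⟨_, _, r⟩ := h v hv; r⟩

end SimpleGraph

theorem Nat.eq_of_forall_fin_lt_iff {n a b : ℕ} (ha : a ≤ n) (hb : b ≤ n)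
    (h : ∀ r : Fin n, (r : ℕ) < a ↔ (r : ℕ) < b) : a = b := by
  by_contra hab
  rcases Nat.lt_or_gt_of_ne hab with hab | hab
  · exact lt_irrefl a ((h ⟨a, by omega⟩).2 hab)
  · exact lt_irrefl b ((h ⟨b, by omega⟩).1 hab)

namespace PendantC4

abbrev Vert (l : Fin 4 → ℕ) := Fin 4 ⊕ Σ i : Fin 4, Fin (l i)

abbrev graph (l : Fin 4 → ℕ) : SimpleGraph (Vert l) := cyclePendants 4 4 ![0, 1, 2, 3] l

def CycAdj (x y : Fin 4) : Prop := ((x : ℕ) + 1) % 4 = y ∨ ((y : ℕ) + 1) % 4 = x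

instance : DecidableRel CycAdj := fun _ _ => by unfold CycAdj; infer_instance

variable {l : Fin 4 → ℕ}

theorem adj_inl_inl {x y : Fin 4} : (graph l).Adj (.inl x) (.inl y) ↔ CycAdj x y := by
  have hx := x.is_lt
  have hy := y.is_lt
  simp only [cyclePendants, exists_and_left, fromRel_adj, ne_eq, Sum.inl.injEq,
    exists_eq_left', reduceCtorEq, false_and, exists_false, and_self, and_false,
    or_self, or_false, CycAdj, and_iff_right_iff_imp]
  omega

theorem adj_inl_inr {x i : Fin 4} {p : Fin (l i)} :
    (graph l).Adj (.inl x) (.inr ⟨i, p⟩) ↔ x = i ∧ (p : ℕ) = 0 := by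
  have hatt : (![0, 1, 2, 3] : Fin 4 → Fin 4) i = i := by fin_cases i <;> rfl
  simp only [cyclePendants, exists_and_left, fromRel_adj, ne_eq, reduceCtorEq,
    not_false_eq_true, Sum.inl.injEq, false_and, exists_const, and_false, Sum.inr.injEq,
    Sigma.mk.injEq, exists_false, ↓existsAndEq, heq_eq_eq, true_and, false_or, exists_eq_left',
    and_self, or_self, or_false]
  constructor
  · rintro ⟨rfl, -, rfl⟩
    exact ⟨hatt, rfl⟩
  · rintro ⟨rfl, hp⟩
    exact ⟨hatt.symm, Nat.pos_of_ne_zero (by omega), Fin.ext hp⟩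

theorem adj_inr_inr {i j : Fin 4} {p : Fin (l i)} {q : Fin (l j)} :
    (graph l).Adj (.inr ⟨i, p⟩) (.inr ⟨j, q⟩) ↔
      i = j ∧ ((p : ℕ) + 1 = q ∨ (q : ℕ) + 1 = p) := by
  simp only [cyclePendants, exists_and_left, fromRel_adj, ne_eq, Sum.inr.injEq,
    Sigma.mk.injEq, not_and, reduceCtorEq, false_and, exists_const, and_self, or_false, false_or]
  constructor
  · rintro ⟨-, ⟨_, _, ⟨rfl, hp⟩, _, ⟨rfl, hq⟩, h⟩ | ⟨_, _, ⟨rfl, hq⟩, _, ⟨rfl, hp⟩, h⟩⟩ <;>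
      cases hp <;> cases hq <;> simp_all
  · rintro ⟨rfl, h⟩
    refine ⟨fun _ hpq => ?_, ?_⟩
    · cases hpq; omega
    · rcases h with h | h
      · exact .inl ⟨i, p, ⟨rfl, .rfl⟩, q, ⟨rfl, .rfl⟩, h⟩
      · exact .inr ⟨i, q, ⟨rfl, .rfl⟩, p, ⟨rfl, .rfl⟩, h⟩

def base : Vert l → Fin 4
  | .inl x => x
  | .inr ⟨i, _⟩ => i

theorem base_eq_or_cycAdj_of_adj {u v : Vert l} (h : (graph l).Adj u v) :
    base u = base v ∨ ∃ x y, u = .inl x ∧ v = .inl y ∧ CycAdj x y := by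
  rcases u with x | ⟨i, p⟩ <;> rcases v with y | ⟨j, q⟩
  · exact .inr ⟨x, y, rfl, rfl, adj_inl_inl.1 h⟩
  · exact .inl (adj_inl_inr.1 h).1
  · exact .inl (adj_inl_inr.1 h.symm).1.symm
  · exact .inl (adj_inr_inr.1 h).1

section Cuts

variable {s : Finset (Vert l)} (hs : ((graph l).induce (s : Set (Vert l))).Preconnected)
include hs

theorem exists_eq_inr_of_inl_notMem {i : Fin 4} {p : Fin (l i)} {v : Vert l}
    (hi : .inl i ∉ s) (hp : .inr ⟨i, p⟩ ∈ s) (hv : v ∈ s) : ∃ q, v = .inr ⟨i, q⟩ := by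
  by_contra hvA
  obtain ⟨_, -, b, hb, ⟨r, rfl⟩, hbA, hab⟩ :=
    hs.exists_adj_boundary_of_induce (A := {w : Vert l | ∃ q, w = .inr ⟨i, q⟩}) hp hv ⟨p, rfl⟩ hvA
  rcases b with y | ⟨j, q⟩
  · obtain ⟨rfl, -⟩ := adj_inl_inr.1 hab.symm
    exact hi hb
  · obtain ⟨rfl, -⟩ := adj_inr_inr.1 hab
    exact hbA ⟨q, rfl⟩

theorem exists_eq_inr_gt_of_notMem {i : Fin 4} {c p : Fin (l i)} {v : Vert l}
    (hc : .inr ⟨i, c⟩ ∉ s) (hp : .inr ⟨i, p⟩ ∈ s) (hcp : c < p) (hv : v ∈ s) :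
    ∃ q, v = .inr ⟨i, q⟩ ∧ c < q := by
  by_contra hvA
  obtain ⟨_, -, b, hb, ⟨r, rfl, hcr⟩, hbA, hab⟩ :=
    hs.exists_adj_boundary_of_induce (A := {w : Vert l | ∃ q, w = .inr ⟨i, q⟩ ∧ c < q}) hp hv
      ⟨p, rfl, hcp⟩ hvA
  rcases b with y | ⟨j, q⟩
  · have := (adj_inl_inr.1 hab.symm).2
    exact absurd hcr (by rw [Fin.lt_def]; omega)
  · obtain ⟨rfl, hrq⟩ := adj_inr_inr.1 hab
    have hqc : ¬ c < q := fun hcq => hbA ⟨q, rfl, hcq⟩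
    rw [Fin.lt_def] at hcr hqc
    obtain rfl : q = c := Fin.ext (by omega)
    exact hc hb

theorem exists_cycAdj_of_base_ne {x : Fin 4} {v : Vert l} (hx : .inl x ∈ s) (hv : v ∈ s)
    (hvx : base v ≠ x) : ∃ y, CycAdj x y ∧ .inl y ∈ s := by
  obtain ⟨a, -, b, hb, rfl, hbA, hab⟩ :=
    hs.exists_adj_boundary_of_induce (A := {w : Vert l | base w = x}) hx hv rfl hvx
  rcases base_eq_or_cycAdj_of_adj hab with h | ⟨x', y, rfl, rfl, hxy⟩
  · exact absurd h.symm hbA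
  · exact ⟨y, hxy, hb⟩

end Cuts

def IsArc (T : Finset (Fin 4)) : Prop := T.Nonempty ∧ T ≠ {0, 2} ∧ T ≠ {1, 3}

instance : DecidablePred IsArc := fun _ => by unfold IsArc; infer_instance

theorem isArc_of_forall_exists_cycAdj {T : Finset (Fin 4)} (hT : T.Nonempty)
    (h : ∀ x ∈ T, ∀ z ∈ T, z ≠ x → ∃ y ∈ T, CycAdj x y) : IsArc T := by
  revert T; decide

theorem IsArc.exists_chain {T : Finset (Fin 4)} (hT : IsArc T) {x y : Fin 4} (hx : x ∈ T)
    (hy : y ∈ T) : ∃ z ∈ T, ∃ w ∈ T,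
      (x = z ∨ CycAdj x z) ∧ (z = w ∨ CycAdj z w) ∧ (w = y ∨ CycAdj w y) := by
  revert T x y; decide

def segment (i : Fin 4) (a b : ℕ) : Finset (Vert l) :=
  (∅ : Finset (Fin 4)).disjSum (Finset.univ.filter fun v : Σ j, Fin (l j) =>
    v.1 = i ∧ a ≤ v.2 ∧ (v.2 : ℕ) ≤ b)

def arcPrefixes (T : Finset (Fin 4)) (t : Fin 4 → ℕ) : Finset (Vert l) :=
  T.disjSum (Finset.univ.filter fun v : Σ j, Fin (l j) => (v.2 : ℕ) < t v.1)

@[simp] theorem inl_notMem_segment {i x : Fin 4} {a b : ℕ} : .inl x ∉ segment (l := l) i a b := by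
  simp [segment]

@[simp] theorem inr_mem_segment {i j : Fin 4} {a b : ℕ} {r : Fin (l j)} :
    .inr ⟨j, r⟩ ∈ segment i a b ↔ j = i ∧ a ≤ r ∧ (r : ℕ) ≤ b := by
  simp [segment]

@[simp] theorem inl_mem_arcPrefixes {T : Finset (Fin 4)} {t : Fin 4 → ℕ} {x : Fin 4} :
    .inl x ∈ arcPrefixes (l := l) T t ↔ x ∈ T := by
  simp [arcPrefixes]

@[simp] theorem inr_mem_arcPrefixes {T : Finset (Fin 4)} {t : Fin 4 → ℕ} {j : Fin 4}
    {r : Fin (l j)} : .inr ⟨j, r⟩ ∈ arcPrefixes T t ↔ (r : ℕ) < t j := by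
  simp [arcPrefixes]

section Classification

variable {s : Finset (Vert l)} (hs : ((graph l).induce (s : Set (Vert l))).Preconnected)
include hs

theorem exists_segment_eq (hne : s.Nonempty) (hno : ∀ x, .inl x ∉ s) :
    ∃ (i : Fin 4) (p q : Fin (l i)), p ≤ q ∧ segment i p q = s := by
  obtain ⟨v₀, hv₀⟩ := hne
  obtain ⟨i, p₀, rfl⟩ : ∃ i p₀, v₀ = .inr ⟨i, p₀⟩ := by
    rcases v₀ with x | ⟨i, p₀⟩
    · exact absurd hv₀ (hno x)
    · exact ⟨i, p₀, rfl⟩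
  set P := Finset.univ.filter fun r : Fin (l i) => .inr ⟨i, r⟩ ∈ s
  have hP : ∀ r, r ∈ P ↔ .inr ⟨i, r⟩ ∈ s := by simp [P]
  have hPne : P.Nonempty := ⟨p₀, (hP p₀).2 hv₀⟩
  refine ⟨i, P.min' hPne, P.max' hPne, P.min'_le _ (P.max'_mem hPne), ?_⟩
  ext v
  rcases v with x | ⟨j, r⟩
  · simpa using hno x
  rw [inr_mem_segment]
  constructor
  · rintro ⟨rfl, hmin, hmax⟩
    by_contra hr
    have hmin_mem := (hP _).1 (P.min'_mem hPne)
    have hmax_mem := (hP _).1 (P.max'_mem hPne)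
    have hr_max : r < P.max' hPne :=
      lt_of_le_of_ne (Fin.le_def.2 hmax) fun h => hr (h ▸ hmax_mem)
    obtain ⟨q, hq, hrq⟩ := exists_eq_inr_gt_of_notMem hs hr hmax_mem hr_max hmin_mem
    obtain rfl : P.min' hPne = q := by simpa using hq
    exact hr (Fin.le_antisymm hmin hrq.le ▸ hmin_mem)
  · intro hr
    obtain ⟨q, hq⟩ := exists_eq_inr_of_inl_notMem hs (hno i) hv₀ hr
    obtain ⟨rfl, hrq⟩ : j = i ∧ r ≍ q := by simpa using hq
    obtain rfl := eq_of_heq hrq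
    exact ⟨rfl, P.min'_le r ((hP r).2 hr), P.le_max' r ((hP r).2 hr)⟩

theorem exists_arcPrefixes_eq {x : Fin 4} (hx : .inl x ∈ s) :
    ∃ T t, IsArc T ∧ (∀ i, t i ≤ l i) ∧ (∀ i ∉ T, t i = 0) ∧ arcPrefixes T t = s := by
  have hbase {i : Fin 4} {p : Fin (l i)} (hp : .inr ⟨i, p⟩ ∈ s) : .inl i ∈ s := by
    by_contra hi
    obtain ⟨q, hq⟩ := exists_eq_inr_of_inl_notMem hs hi hp hx
    exact Sum.inl_ne_inr hq
  have hprefix {i : Fin 4} {p c : Fin (l i)} (hp : .inr ⟨i, p⟩ ∈ s) (hcp : c ≤ p) :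
      .inr ⟨i, c⟩ ∈ s := by
    rcases hcp.lt_or_eq with hcp | rfl
    · by_contra hc
      obtain ⟨q, hq, -⟩ := exists_eq_inr_gt_of_notMem hs hc hp hcp hx
      exact Sum.inl_ne_inr hq
    · exact hp
  set t : Fin 4 → ℕ := fun i =>
    (Finset.univ.filter fun r : Fin (l i) => .inr ⟨i, r⟩ ∈ s).sup fun r => r + 1
  have hmem {i : Fin 4} (r : Fin (l i)) : .inr ⟨i, r⟩ ∈ s ↔ (r : ℕ) < t i := by
    constructor
    · intro hr
      exact Finset.le_sup (f := fun r : Fin (l i) => (r : ℕ) + 1) (by simpa using hr)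
    · intro hr
      obtain ⟨r', hr', hrr'⟩ := Finset.lt_sup_iff.1 hr
      exact hprefix (by simpa using hr') (Fin.le_def.2 (by omega))
  refine ⟨Finset.univ.filter (.inl · ∈ s), t, ?_, ?_, ?_, ?_⟩
  · refine isArc_of_forall_exists_cycAdj ⟨x, by simpa using hx⟩ fun x' hx' z hz hzx => ?_
    obtain ⟨y, hxy, hy⟩ :=
      exists_cycAdj_of_base_ne hs (by simpa using hx') (v := .inl z) (by simpa using hz) hzx
    exact ⟨y, by simpa using hy, hxy⟩
  · exact fun i => Finset.sup_le fun r _ => r.is_lt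
  · intro i hi
    by_contra h0
    obtain ⟨r, hr, -⟩ := Finset.lt_sup_iff.1 (Nat.pos_of_ne_zero h0)
    exact hi (by simpa using hbase (by simpa using hr))
  · ext v
    rcases v with y | ⟨j, r⟩
    · simp
    · rw [inr_mem_arcPrefixes, hmem]

end Classification

section Connected

variable {s : Set (Vert l)}

theorem reachIn_inr_inr {i : Fin 4} {p q : Fin (l i)} (hpq : p ≤ q)
    (hs : ∀ c : Fin (l i), p ≤ c → c ≤ q → .inr ⟨i, c⟩ ∈ s) :
    (graph l).ReachIn s (.inr ⟨i, p⟩) (.inr ⟨i, q⟩) := by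
  obtain ⟨d, hd⟩ : ∃ d, (q : ℕ) = p + d := ⟨q - p, by rw [Fin.le_def] at hpq; omega⟩
  induction d generalizing q with
  | zero =>
    obtain rfl : p = q := Fin.ext hd.symm
    exact .refl (hs p le_rfl le_rfl)
  | succ d ih =>
    let q' : Fin (l i) := ⟨p + d, by omega⟩
    have hq' : q' ≤ q := Fin.le_def.2 (by simp only [q']; omega)
    have hpq' : p ≤ q' := Fin.le_def.2 (by simp only [q']; omega)
    refine (ih hpq' (fun c h₁ h₂ => hs c h₁ (h₂.trans hq')) rfl).trans
      (.of_adj (hs q' hpq' hq') (hs q hpq le_rfl) (adj_inr_inr.2 ⟨rfl, .inl ?_⟩))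
    simp only [q']
    omega

theorem reachIn_inl_inr {i : Fin 4} {r : Fin (l i)} (hi : .inl i ∈ s)
    (hs : ∀ c ≤ r, .inr ⟨i, c⟩ ∈ s) : (graph l).ReachIn s (.inl i) (.inr ⟨i, r⟩) :=
  let z : Fin (l i) := ⟨0, Nat.zero_lt_of_lt r.is_lt⟩
  have hzr : z ≤ r := Fin.le_def.2 (Nat.zero_le _)
  (ReachIn.of_adj hi (hs z hzr) (adj_inl_inr.2 ⟨rfl, rfl⟩)).trans
    (reachIn_inr_inr hzr fun c _ hc => hs c hc)

theorem reachIn_inl_inl {x y : Fin 4} (hx : .inl x ∈ s) (hy : .inl y ∈ s)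
    (h : x = y ∨ CycAdj x y) : (graph l).ReachIn s (.inl x) (.inl y) := by
  rcases h with rfl | h
  · exact .refl hx
  · exact .of_adj hx hy (adj_inl_inl.2 h)

theorem segment_connected {i : Fin 4} {p q : Fin (l i)} (hpq : p ≤ q) :
    ((graph l).induce (segment (l := l) i p q : Set (Vert l))).Connected := by
  refine induce_connected_of_forall_reachIn (u := .inr ⟨i, p⟩)
    (inr_mem_segment.2 ⟨rfl, le_rfl, hpq⟩) fun v hv => ?_
  rcases v with x | ⟨j, r⟩
  · simp at hv
  · obtain ⟨rfl, hpr, hrq⟩ := inr_mem_segment.1 hv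
    exact reachIn_inr_inr (Fin.le_def.2 hpr) fun c hpc hcr =>
      inr_mem_segment.2 ⟨rfl, hpc, (Fin.le_def.1 hcr).trans hrq⟩

theorem arcPrefixes_connected {T : Finset (Fin 4)} {t : Fin 4 → ℕ} (hT : IsArc T)
    (ht : ∀ i ∉ T, t i = 0) :
    ((graph l).induce (arcPrefixes (l := l) T t : Set (Vert l))).Connected := by
  obtain ⟨x, hx⟩ := hT.1
  have hmem {y : Fin 4} (hy : y ∈ T) : .inl y ∈ (arcPrefixes (l := l) T t : Set (Vert l)) := by
    simpa using hy
  have hcycle {y : Fin 4} (hy : y ∈ T) :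
      (graph l).ReachIn (arcPrefixes (l := l) T t) (.inl x) (.inl y) := by
    obtain ⟨z, hz, w, hw, hxz, hzw, hwy⟩ := hT.exists_chain hx hy
    exact ((reachIn_inl_inl (hmem hx) (hmem hz) hxz).trans
      (reachIn_inl_inl (hmem hz) (hmem hw) hzw)).trans (reachIn_inl_inl (hmem hw) (hmem hy) hwy)
  refine induce_connected_of_forall_reachIn (hmem hx) fun v hv => ?_
  rcases v with y | ⟨i, r⟩
  · exact hcycle (by simpa using hv)
  · have hr : (r : ℕ) < t i := by simpa using hv
    have hi : i ∈ T := by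
      by_contra hi
      rw [ht i hi] at hr
      omega
    exact (hcycle hi).trans (reachIn_inl_inr (hmem hi) fun c hc => by
      simp only [Finset.mem_coe, inr_mem_arcPrefixes, Fin.le_def] at hc ⊢
      omega)

end Connected

abbrev SegmentData (l : Fin 4 → ℕ) := Σ i : Fin 4, {pq : Fin (l i) × Fin (l i) // pq.1 ≤ pq.2}

/-- `t i` is the number of vertices taken from the pendant path at `i`; the `if` forces it to
vanish off `T`. -/
abbrev ArcData (l : Fin 4 → ℕ) :=
  Σ T : {T : Finset (Fin 4) // IsArc T}, ∀ i, Fin (if i ∈ T.1 then l i + 1 else 1)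

def SegmentData.toFinset (c : SegmentData l) : Finset (Vert l) := segment c.1 c.2.1.1 c.2.1.2

def ArcData.toFinset (c : ArcData l) : Finset (Vert l) := arcPrefixes c.1.1 fun i => c.2 i

theorem ArcData.val_le (c : ArcData l) (i : Fin 4) : (c.2 i : ℕ) ≤ l i := by
  have := (c.2 i).is_lt
  split_ifs at this <;> omega

theorem ArcData.val_eq_zero (c : ArcData l) {i : Fin 4} (hi : i ∉ c.1.1) : (c.2 i : ℕ) = 0 := by
  have := (c.2 i).is_lt
  split_ifs at this
  omega

theorem SegmentData.toFinset_injective : Function.Injective (SegmentData.toFinset (l := l)) := by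
  rintro ⟨i, ⟨⟨p, q⟩, hpq⟩⟩ ⟨i', ⟨⟨p', q'⟩, hpq'⟩⟩ h
  have hmem (j : Fin 4) (r : Fin (l j)) :
      (j = i ∧ p ≤ (r : ℕ) ∧ (r : ℕ) ≤ q) ↔ (j = i' ∧ p' ≤ (r : ℕ) ∧ (r : ℕ) ≤ q') := by
    simpa only [SegmentData.toFinset, inr_mem_segment] using Finset.ext_iff.1 h (.inr ⟨j, r⟩)
  obtain ⟨rfl, hp'p, -⟩ := (hmem i p).1 ⟨rfl, le_rfl, hpq⟩
  obtain ⟨-, -, hqq'⟩ := (hmem i q).1 ⟨rfl, hpq, le_rfl⟩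
  obtain ⟨-, hpp', -⟩ := (hmem i p').2 ⟨rfl, le_rfl, hpq'⟩
  obtain ⟨-, -, hq'q⟩ := (hmem i q').2 ⟨rfl, hpq', le_rfl⟩
  obtain rfl : p = p' := Fin.ext (le_antisymm hpp' hp'p)
  obtain rfl : q = q' := Fin.ext (le_antisymm hqq' hq'q)
  rfl

theorem ArcData.toFinset_injective : Function.Injective (ArcData.toFinset (l := l)) := by
  rintro c c' h
  have hT : c.1 = c'.1 := Subtype.ext <| Finset.ext fun x => by
    simpa only [ArcData.toFinset, inl_mem_arcPrefixes] using Finset.ext_iff.1 h (.inl x)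
  obtain ⟨⟨T, hT⟩, t⟩ := c
  obtain ⟨⟨T', hT'⟩, t'⟩ := c'
  obtain ⟨rfl⟩ := hT
  have ht : t = t' := funext fun i => Fin.ext <|
    Nat.eq_of_forall_fin_lt_iff (ArcData.val_le ⟨_, t⟩ i) (ArcData.val_le ⟨_, t'⟩ i) fun r => by
      simpa only [ArcData.toFinset, inr_mem_arcPrefixes] using Finset.ext_iff.1 h (.inr ⟨i, r⟩)
  rw [ht]

abbrev Shape (l : Fin 4 → ℕ) := SegmentData l ⊕ ArcData l

def Shape.toFinset : Shape l → Finset (Vert l) := Sum.elim SegmentData.toFinset ArcData.toFinset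

theorem Shape.toFinset_injective : Function.Injective (Shape.toFinset (l := l)) := by
  refine SegmentData.toFinset_injective.sumElim ArcData.toFinset_injective fun c c' h => ?_
  obtain ⟨x, hx⟩ := c'.1.2.1
  have : .inl x ∈ c.toFinset := h ▸ inl_mem_arcPrefixes.2 hx
  exact inl_notMem_segment this

theorem Shape.toFinset_connected (c : Shape l) :
    ((graph l).induce (↑c.toFinset : Set (Vert l))).Connected := by
  rcases c with ⟨i, ⟨⟨p, q⟩, hpq⟩⟩ | c
  · simp only [Shape.toFinset, Sum.elim_inl, SegmentData.toFinset]
    exact segment_connected hpq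
  · simp only [Shape.toFinset, Sum.elim_inr, ArcData.toFinset]
    exact arcPrefixes_connected c.1.2 fun i hi => c.val_eq_zero hi

theorem Shape.exists_toFinset_eq {s : Finset (Vert l)} (hne : s.Nonempty)
    (hs : ((graph l).induce (s : Set (Vert l))).Preconnected) : ∃ c : Shape l, c.toFinset = s := by
  by_cases hcyc : ∃ x, .inl x ∈ s
  · obtain ⟨x, hx⟩ := hcyc
    obtain ⟨T, t, hT, htl, ht0, rfl⟩ := exists_arcPrefixes_eq hs hx
    refine ⟨.inr ⟨⟨T, hT⟩, fun i => ⟨t i, ?_⟩⟩, rfl⟩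
    split_ifs with hi
    · exact Nat.lt_succ_of_le (htl i)
    · simp [ht0 i hi]
  · simp only [not_exists] at hcyc
    obtain ⟨i, p, q, hpq, rfl⟩ := exists_segment_eq hs hne hcyc
    exact ⟨.inl ⟨i, ⟨(p, q), hpq⟩⟩, rfl⟩

theorem Shape.toFinset_nonempty (c : Shape l) : c.toFinset.Nonempty :=
  let ⟨⟨v, hv⟩⟩ := c.toFinset_connected.nonempty
  ⟨v, hv⟩

theorem numCIS_graph_eq_card (l : Fin 4 → ℕ) : numCIS (graph l) = Fintype.card (Shape l) := by
  let e : Shape l ≃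
      {s : Finset (Vert l) // s.Nonempty ∧ ((graph l).induce (s : Set (Vert l))).Connected} :=
    Equiv.ofBijective (fun c => ⟨c.toFinset, c.toFinset_nonempty, c.toFinset_connected⟩)
      ⟨fun c c' h => Shape.toFinset_injective (congrArg Subtype.val h),
        fun ⟨s, hne, hs⟩ => (Shape.exists_toFinset_eq hne hs.preconnected).imp
          fun _ hc => Subtype.ext hc⟩
  rw [numCIS, ← Nat.card_congr e, Nat.card_eq_fintype_card]

def numIntervals (k : ℕ) : ℕ := Fintype.card {pq : Fin k × Fin k // pq.1 ≤ pq.2}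

def arcWeight (a : Fin 4 → ℕ) : ℕ := ∑ T ∈ Finset.univ.filter IsArc, ∏ i ∈ T, a i

theorem card_shape (l : Fin 4 → ℕ) :
    Fintype.card (Shape l) = ∑ i, numIntervals (l i) + arcWeight fun i => l i + 1 := by
  have hseg : Fintype.card (SegmentData l) = ∑ i, numIntervals (l i) := Fintype.card_sigma
  have harc : Fintype.card (ArcData l) = arcWeight fun i => l i + 1 := by
    rw [Fintype.card_sigma, arcWeight, Finset.sum_subtype _ (p := IsArc) (fun T => by simp)]
    refine Fintype.sum_congr _ _ fun T => ?_
    simp only [Fintype.card_pi, Fintype.card_fin]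
    exact Fintype.prod_ite_mem _ _
  rw [Fintype.card_sum, hseg, harc]

theorem arcWeight_eq (a : Fin 4 → ℕ) :
    arcWeight a = (a 0 + a 1 + a 2 + a 3) + (a 0 + a 2) * (a 1 + a 3) +
      (a 0 * a 1 * a 2 + a 1 * a 2 * a 3 + a 2 * a 3 * a 0 + a 3 * a 0 * a 1) +
      a 0 * a 1 * a 2 * a 3 := by
  have harcs : Finset.univ.filter IsArc = {{0}, {1}, {2}, {3}, {0, 1}, {1, 2}, {2, 3}, {3, 0},
      {0, 1, 2}, {1, 2, 3}, {2, 3, 0}, {3, 0, 1}, {0, 1, 2, 3}} := by decide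
  rw [arcWeight, harcs]
  simp +decide only [Finset.mem_insert, Finset.mem_singleton, Finset.sum_insert,
    Finset.sum_singleton, Finset.prod_insert, Finset.prod_singleton]
  ring

end PendantC4

/-- With `H1` the 4-cycle with pendant paths of `n0, n0, n0-1, n0-1` new vertices at
`v0, v1, v2, v3` (longer paths at adjacent cycle vertices) and `H2` the 4-cycle with
pendant paths of `n0, n0-1, n0, n0-1` new vertices (longer paths at opposite vertices),
`N(H1) - N(H2) = 1`; in particular `N(H2) < N(H1)`. -/
theorem numCIS_adjacent_vs_opposite (n0 : ℕ) (h : 2 ≤ n0) :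
    numCIS (cyclePendants 4 4 ![0, 1, 2, 3] ![n0, n0, n0 - 1, n0 - 1]) =
      numCIS (cyclePendants 4 4 ![0, 1, 2, 3] ![n0, n0 - 1, n0, n0 - 1]) + 1 ∧
    numCIS (cyclePendants 4 4 ![0, 1, 2, 3] ![n0, n0 - 1, n0, n0 - 1]) <
      numCIS (cyclePendants 4 4 ![0, 1, 2, 3] ![n0, n0, n0 - 1, n0 - 1]) := by
  obtain ⟨m, rfl⟩ : ∃ m, n0 = m + 1 := ⟨n0 - 1, by omega⟩
  have key : numCIS (cyclePendants 4 4 ![0, 1, 2, 3] ![m + 1, m + 1, m, m]) =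
      numCIS (cyclePendants 4 4 ![0, 1, 2, 3] ![m + 1, m, m + 1, m]) + 1 := by
    simp only [PendantC4.numCIS_graph_eq_card, PendantC4.card_shape, PendantC4.arcWeight_eq,
      Fin.sum_univ_four, Matrix.cons_val_zero, Matrix.cons_val_one, Matrix.cons_val]
    ring
  exact ⟨key, key ▸ Nat.lt_succ_self _⟩
end
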